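/- arXiv:2403.05800 — 10 statements merged into one kernel-verified Lean document; each statement's English description precedes it below -/
import Mathlib

section
/- Let R be a (not necessarily commutative) ring, let u, v ∈ R, and let c ∈ R be a central element satisfying v·u = c. For every integer m ≥ 0 set W_m := ∑_{k=0}^{m} u^k·v^{m−k}. Then: (1) (u+v)·W_0 = W_1 and, for every m ≥ 1, (u+v)·W_m = W_{m+1} + c·W_{m−1}; (2) for every m ≥ 0, (u+v)^m = ∑_{A=0}^{⌊m/2⌋} C(m−A, A)·c^A·W_{m−2A}. -/
/-- `C(A,B) := binom(A+B, B) − binom(A+B, B−1)`, with the convention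
`binom(a, −1) = 0`. -/
def heckeC (A B : ℕ) : ℤ :=
  ((A + B).choose B : ℤ) - (if B = 0 then 0 else ((A + B).choose (B - 1) : ℤ))

/-! Put `V n = ∑_{k<n} u^k v^(n-1-k)`, so that `W m = V (m+1)` and `V 0 = 0` plays the role of
`W₋₁`. Since `u V(n+1) = V(n+2) - v^(n+1)` and `v V(n+1) = c V n + v^(n+1)`, the recursion
`(u+v) V(n+1) = V(n+2) + c V n` holds for every `n`, with no boundary case. Multiplying an
expansion of `(u+v)^m` by `u+v` therefore sends `c^B V(m+1-2B)` to `c^B V(m+2-2B) + c^(B+1) V(m-2B)`,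
so the coefficients obey Pascal's rule `b(m+1,B+1) = b(m,B+1) + b(m,B)`, solved by
`b(m,B) = binom(m,B) - binom(m,B-1) = C(m-B,B)`. The one term that this rule gets wrong,
`2B = m+1` (where `V(m+1-2B) = V 0`), has coefficient `binom(2B-1,B) - binom(2B-1,B-1) = 0`, and terms with `2B > m`
vanish because truncated subtraction sends their index to `V 0 = 0`. -/

open Finset

def ballot (m : ℕ) : ℕ → ℤ
  | 0 => 1
  | B + 1 => (m.choose (B + 1) : ℤ) - m.choose B

@[simp]
theorem ballot_zero_right (m : ℕ) : ballot m 0 = 1 := rfl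

theorem ballot_succ_succ (m B : ℕ) : ballot (m + 1) (B + 1) = ballot m (B + 1) + ballot m B := by
  cases B <;> simp only [ballot, Nat.choose_succ_succ, Nat.choose_zero_right] <;> push_cast <;> ring

theorem ballot_central (k : ℕ) : ballot (2 * k + 1) (k + 1) = 0 := by
  simp [ballot, Nat.choose_symm_half]

theorem heckeC_eq_ballot {m B : ℕ} (h : B ≤ m) : heckeC (m - B) B = ballot m B := by
  rw [heckeC, Nat.sub_add_cancel h]
  cases B <;> simp [ballot]

section Expansion

variable {R : Type*} [Ring R] {T c : R} {V : ℕ → R}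

theorem mul_ballot_smul (hTc : Commute T c) (h0 : V 0 = 0)
    (hrec : ∀ n, T * V (n + 1) = V (n + 2) + c * V n) (m B : ℕ) :
    T * (ballot m B • (c ^ B * V (m + 1 - 2 * B))) =
      ballot m B • (c ^ B * V (m + 2 - 2 * B)) +
        ballot m B • (c ^ (B + 1) * V (m - 2 * B)) := by
  rw [mul_smul_comm, (hTc.pow_right B).left_comm, ← smul_add, pow_succ, mul_assoc, ← mul_add]
  obtain hle | heq | hlt : 2 * B ≤ m ∨ 2 * B = m + 1 ∨ m + 2 ≤ 2 * B := by omega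
  · obtain ⟨n, rfl⟩ := Nat.exists_eq_add_of_le hle
    rw [show 2 * B + n + 1 - 2 * B = n + 1 by omega, show 2 * B + n + 2 - 2 * B = n + 2 by omega,
      Nat.add_sub_cancel_left, hrec]
  · obtain ⟨k, rfl, rfl⟩ : ∃ k, m = 2 * k + 1 ∧ B = k + 1 := ⟨B - 1, by omega, by omega⟩
    simp [ballot_central]
  · simp [h0, Nat.sub_eq_zero_of_le hlt, Nat.sub_eq_zero_of_le (by omega : m + 1 ≤ 2 * B),
      Nat.sub_eq_zero_of_le (by omega : m ≤ 2 * B)]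

theorem pow_eq_sum_ballot (hTc : Commute T c) (h0 : V 0 = 0) (h1 : V 1 = 1)
    (hrec : ∀ n, T * V (n + 1) = V (n + 2) + c * V n) (m : ℕ) :
    T ^ m = ∑ B ∈ range (m + 1), ballot m B • (c ^ B * V (m + 1 - 2 * B)) := by
  induction m with
  | zero => simp [h1]
  | succ m ih =>
    have hidx : ∀ B, m + 2 - 2 * (B + 1) = m - 2 * B := fun B => by omega
    have hshift : ∑ B ∈ range (m + 1), ballot m B • (c ^ B * V (m + 2 - 2 * B)) =
        ∑ B ∈ range (m + 1), ballot m (B + 1) • (c ^ (B + 1) * V (m - 2 * B)) + V (m + 2) := by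
      have hlast : V (m - 2 * m) = 0 := by rw [Nat.sub_eq_zero_of_le (by omega), h0]
      rw [sum_range_succ', sum_range_succ _ m, hlast]
      simp [hidx]
    rw [pow_succ', ih, mul_sum]
    simp only [mul_ballot_smul hTc h0 hrec, sum_add_distrib]
    rw [hshift, sum_range_succ' _ (m + 1)]
    simp only [ballot_succ_succ, add_smul, sum_add_distrib, show m + 1 + 1 = m + 2 from rfl, hidx]
    rw [ballot_zero_right, pow_zero, one_mul, one_smul, Nat.mul_zero, Nat.sub_zero]
    abel

theorem sum_ballot_range_half (h0 : V 0 = 0) (m : ℕ) :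
    ∑ B ∈ range (m / 2 + 1), ballot m B • (c ^ B * V (m + 1 - 2 * B)) =
      ∑ B ∈ range (m + 1), ballot m B • (c ^ B * V (m + 1 - 2 * B)) := by
  refine sum_subset (range_subset_range.mpr (by omega)) fun B _ hB => ?_
  rw [mem_range, not_lt] at hB
  simp [Nat.sub_eq_zero_of_le (by omega : m + 1 ≤ 2 * B), h0]

end Expansion

section GeomSum

variable {R : Type*} [Ring R]

def geomSum₂ (u v : R) (n : ℕ) : R :=
  ∑ k ∈ range n, u ^ k * v ^ (n - 1 - k)

variable (u v : R)

theorem geomSum₂_zero : geomSum₂ u v 0 = 0 := by simp [geomSum₂]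

theorem geomSum₂_one : geomSum₂ u v 1 = 1 := by simp [geomSum₂]

theorem geomSum₂_succ (n : ℕ) :
    geomSum₂ u v (n + 1) = ∑ k ∈ range (n + 1), u ^ k * v ^ (n - k) := by
  simp [geomSum₂]

theorem geomSum₂_succ_eq_mul_add (n : ℕ) :
    geomSum₂ u v (n + 1) = u * geomSum₂ u v n + v ^ n := by
  rw [geomSum₂_succ, sum_range_succ', geomSum₂, mul_sum]
  simp [pow_succ', mul_assoc, Nat.sub_sub, add_comm 1]

theorem mul_geomSum₂_succ {c : R} (hvu : v * u = c) (n : ℕ) :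
    v * geomSum₂ u v (n + 1) = c * geomSum₂ u v n + v ^ (n + 1) := by
  rw [geomSum₂_succ, mul_sum, sum_range_succ', geomSum₂, mul_sum]
  simp [pow_succ', ← mul_assoc, hvu, Nat.sub_sub, add_comm 1]

theorem add_mul_geomSum₂_succ {c : R} (hvu : v * u = c) (n : ℕ) :
    (u + v) * geomSum₂ u v (n + 1) = geomSum₂ u v (n + 2) + c * geomSum₂ u v n := by
  rw [add_mul, mul_geomSum₂_succ u v hvu, geomSum₂_succ_eq_mul_add u v (n + 1)]
  abel

end GeomSum

/-- Let `R` be a (not necessarily commutative) ring, `u v c : R` with `c`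
central and `v * u = c`.  Setting `W m = ∑_{k=0}^m u^k v^{m-k}`, we have
`(u+v) W₀ = W₁`, `(u+v) Wₘ = W_{m+1} + c W_{m-1}` for `m ≥ 1`, and
`(u+v)^m = ∑_{A=0}^{⌊m/2⌋} C(m−A,A) c^A W_{m−2A}`. -/
theorem hecke_power_expansion (R : Type*) [Ring R] (u v c : R)
    (hc : ∀ r : R, c * r = r * c) (hvu : v * u = c)
    (W : ℕ → R) (hW : ∀ m, W m = ∑ k ∈ Finset.range (m + 1), u ^ k * v ^ (m - k)) :
    ((u + v) * W 0 = W 1 ∧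
      ∀ m : ℕ, 1 ≤ m → (u + v) * W m = W (m + 1) + c * W (m - 1)) ∧
    ∀ m : ℕ, (u + v) ^ m =
      ∑ A ∈ Finset.range (m / 2 + 1), heckeC (m - A) A • (c ^ A * W (m - 2 * A)) := by
  have hWV : ∀ m, W m = geomSum₂ u v (m + 1) := fun m => by rw [hW, geomSum₂_succ]
  have hrec := add_mul_geomSum₂_succ u v hvu
  refine ⟨⟨?_, fun m hm => ?_⟩, fun m => ?_⟩
  · simpa [hWV, geomSum₂_zero] using hrec 0
  · obtain ⟨n, rfl⟩ := Nat.exists_eq_add_of_le' hm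
    simpa [hWV] using hrec (n + 1)
  · rw [pow_eq_sum_ballot (hc (u + v)).symm (geomSum₂_zero u v) (geomSum₂_one u v) hrec,
      ← sum_ballot_range_half (geomSum₂_zero u v)]
    refine sum_congr rfl fun A hmem => ?_
    have hA : 2 * A ≤ m := by rw [mem_range] at hmem; omega
    rw [heckeC_eq_ballot (by omega), hWV, Nat.sub_add_comm hA]
end

section
/- Let p be a prime and n ≥ 2 an even integer. Suppose a sequence (W_m)_{m≥0} of elements of ℚ_p converges p-adically to W ∈ ℚ_p. Then the sequence m ↦ ∑_{A=0}^{⌊m!/2⌋} C(m!−A, A)·p^{(n+1)A}·W_{m!−2A} converges p-adically, as m → ∞, to (1 − p^{n+1})·W. -/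
open Filter Topology

/-!
Since `m!` tends to `0` `p`-adically, `binom(m!, A) → binom(0, A)` for each fixed `A`, so
`C(m! - A, A) = binom(m!, A) - binom(m!, A - 1)` tends to `1, -1, 0, 0, …` for `A = 0, 1, 2, …`.
The coefficients are integers, hence of norm at most `1`, so the `A`-th term is dominated by
`‖p^{n+1}‖^A · sup ‖W‖`, a convergent geometric series; Tannery's theorem lets us pass to the
limit termwise, leaving `W - p^{n+1} W`.
-/

open Finset

theorem Padic.tendsto_natCast_factorial_nhds_zero (p : ℕ) [Fact p.Prime] :
    Tendsto (fun m : ℕ => (m.factorial : ℚ_[p])) atTop (𝓝 0) := by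
  rw [NormedAddGroup.tendsto_nhds_zero]
  intro ε hε
  obtain ⟨k, hk⟩ : ∃ k : ℕ, ‖(p : ℚ_[p])‖ ^ k < ε :=
    exists_pow_lt_of_lt_one hε Padic.norm_p_lt_one
  filter_upwards [eventually_ge_atTop (p ^ k)] with m hm
  obtain ⟨t, ht⟩ : p ^ k ∣ m.factorial :=
    (Nat.dvd_factorial (pow_pos (Fact.out : p.Prime).pos k) le_rfl).trans
      (Nat.factorial_dvd_factorial hm)
  calc ‖(m.factorial : ℚ_[p])‖ = ‖(p : ℚ_[p])‖ ^ k * ‖(t : ℚ_[p])‖ := by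
        rw [ht, Nat.cast_mul, Nat.cast_pow, norm_mul, norm_pow]
    _ ≤ ‖(p : ℚ_[p])‖ ^ k :=
        mul_le_of_le_one_right (by positivity) (IsUltrametricDist.norm_natCast_le_one _ t)
    _ < ε := hk

theorem tendsto_natCast_choose_of_tendsto_zero {K ι : Type*} [Field K] [CharZero K]
    [TopologicalSpace K] [IsTopologicalRing K] {l : Filter ι} {a : ι → ℕ}
    (ha : Tendsto (fun i => (a i : K)) l (𝓝 0)) (k : ℕ) :
    Tendsto (fun i => ((a i).choose k : K)) l (𝓝 (if k = 0 then 1 else 0)) := by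
  simp_rw [Nat.cast_choose_eq_descPochhammer_div]
  have h := (((descPochhammer K k).continuous.tendsto 0).comp ha).div_const (k.factorial : K)
  rw [descPochhammer_eval_zero] at h
  split_ifs at h ⊢ with hk <;> simpa [hk] using h

theorem heckeC_sub_self {N B : ℕ} (h : B ≤ N) :
    heckeC (N - B) B = N.choose B - if B = 0 then 0 else (N.choose (B - 1) : ℤ) := by
  rw [heckeC, Nat.sub_add_cancel h]

theorem tendsto_heckeC_sub {K ι : Type*} [Field K] [CharZero K] [TopologicalSpace K]
    [IsTopologicalRing K] {l : Filter ι} {a : ι → ℕ} (ha_top : Tendsto a l atTop)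
    (ha : Tendsto (fun i => (a i : K)) l (𝓝 0)) (B : ℕ) :
    Tendsto (fun i => (heckeC (a i - B) B : K)) l
      (𝓝 (if B = 0 then 1 else if B = 1 then -1 else 0)) := by
  have hchoose := tendsto_natCast_choose_of_tendsto_zero ha
  have hsub : (fun i => ((a i).choose B : K) - if B = 0 then 0 else ((a i).choose (B - 1) : K))
      =ᶠ[l] fun i => (heckeC (a i - B) B : K) := by
    filter_upwards [ha_top.eventually_ge_atTop B] with i hi
    rw [heckeC_sub_self hi]
    split_ifs <;> push_cast <;> rfl
  refine Tendsto.congr' hsub ?_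
  rcases B with _ | _ | B
  · simpa using hchoose 0
  · simpa using (hchoose 1).sub (hchoose 0)
  · simpa using (hchoose (B + 2)).sub (hchoose (B + 1))

theorem tendsto_sum_range_of_dominated {G ι : Type*} [NormedAddCommGroup G] [CompleteSpace G]
    {l : Filter ι} {N : ι → ℕ} {f : ι → ℕ → G} {g : ℕ → G} {bound : ℕ → ℝ}
    (hN : Tendsto N l atTop) (h_sum : Summable bound)
    (hf : ∀ k, Tendsto (f · k) l (𝓝 (g k))) (h_bound : ∀ i k, ‖f i k‖ ≤ bound k) :
    Tendsto (fun i => ∑ k ∈ range (N i), f i k) l (𝓝 (∑' k, g k)) := by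
  refine (tendsto_tsum_of_dominated_convergence (f := fun i k => if k < N i then f i k else 0)
    h_sum (fun k => ?_) (Eventually.of_forall fun i k => ?_)).congr fun i => ?_
  · refine (hf k).congr' ?_
    filter_upwards [hN.eventually_gt_atTop k] with i hi
    simp [hi]
  · split_ifs
    · exact h_bound i k
    · simpa using (norm_nonneg _).trans (h_bound i k)
  · rw [tsum_eq_sum (s := range (N i)) (fun k hk => by simp_all)]
    exact sum_congr rfl fun k hk => by simp_all

theorem tendsto_sum_heckeC_mul_pow {K : Type*} [NormedField K] [CompleteSpace K]
    [IsUltrametricDist K] [CharZero K] {a : ℕ → ℕ} (ha_top : Tendsto a atTop atTop)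
    (ha : Tendsto (fun m => (a m : K)) atTop (𝓝 0)) {q : K} (hq : ‖q‖ < 1) {W : ℕ → K} {w : K}
    (hW : Tendsto W atTop (𝓝 w)) :
    Tendsto (fun m => ∑ A ∈ range (a m / 2 + 1),
        (heckeC (a m - A) A : K) * q ^ A * W (a m - 2 * A)) atTop (𝓝 ((1 - q) * w)) := by
  obtain ⟨C, hC⟩ := hW.norm.bddAbove_range
  have hsum :
      ∑' A, (if A = 0 then 1 else if A = 1 then -1 else 0) * q ^ A * w = (1 - q) * w := by
    rw [tsum_eq_sum (s := range 2) fun A hA => by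
      simp_all only [mem_range, not_lt]
      simp [show A ≠ 0 by omega, show A ≠ 1 by omega]]
    simp [sum_range_succ]
    ring
  rw [← hsum]
  refine tendsto_sum_range_of_dominated (bound := fun A => ‖q‖ ^ A * C)
    (tendsto_add_atTop_nat 1 |>.comp <| (Nat.tendsto_div_const_atTop two_ne_zero).comp ha_top)
    ((summable_geometric_of_lt_one (norm_nonneg _) hq).mul_right C) (fun A => ?_) fun m A => ?_
  · exact ((tendsto_heckeC_sub ha_top ha A).mul_const _).mul
      (hW.comp ((tendsto_sub_atTop_nat (2 * A)).comp ha_top))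
  · calc ‖(heckeC (a m - A) A : K) * q ^ A * W (a m - 2 * A)‖
          = ‖(heckeC (a m - A) A : K)‖ * ‖q‖ ^ A * ‖W (a m - 2 * A)‖ := by
            rw [norm_mul, norm_mul, norm_pow]
      _ ≤ 1 * ‖q‖ ^ A * C := by
            gcongr
            · exact IsUltrametricDist.norm_intCast_le_one K _
            · exact hC ⟨_, rfl⟩
      _ = ‖q‖ ^ A * C := by rw [one_mul]

theorem limit_lemma_general (p : ℕ) [Fact p.Prime] (n : ℕ)
    (W : ℕ → ℚ_[p]) (Wlim : ℚ_[p]) (hW : Tendsto W atTop (nhds Wlim)) :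
    Tendsto
      (fun m : ℕ =>
        ∑ A ∈ Finset.range (m.factorial / 2 + 1),
          (heckeC (m.factorial - A) A : ℚ_[p]) * (p : ℚ_[p]) ^ ((n + 1) * A) *
            W (m.factorial - 2 * A))
      atTop (nhds ((1 - (p : ℚ_[p]) ^ (n + 1)) * Wlim)) := by
  have hq : ‖(p : ℚ_[p]) ^ (n + 1)‖ < 1 := by
    rw [norm_pow]
    exact pow_lt_one₀ (norm_nonneg _) Padic.norm_p_lt_one n.succ_ne_zero
  simpa only [pow_mul] using tendsto_sum_heckeC_mul_pow factorial_tendsto_atTop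
    (Padic.tendsto_natCast_factorial_nhds_zero p) hq hW

/-- Let `p` be a prime and `n ≥ 2` an even integer.  If `(W_m)` is a sequence
in `ℚ_p` converging `p`-adically to `W`, then
`∑_{A=0}^{⌊m!/2⌋} C(m!−A, A) p^{(n+1)A} W_{m!−2A}` converges `p`-adically, as
`m → ∞`, to `(1 − p^{n+1}) W`. -/
theorem limit_lemma (p : ℕ) [Fact p.Prime] (n : ℕ) (hn : 2 ≤ n) (hne : Even n)
    (W : ℕ → ℚ_[p]) (Wlim : ℚ_[p]) (hW : Tendsto W atTop (nhds Wlim)) :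
    Tendsto
      (fun m : ℕ =>
        ∑ A ∈ Finset.range (m.factorial / 2 + 1),
          (heckeC (m.factorial - A) A : ℚ_[p]) * (p : ℚ_[p]) ^ ((n + 1) * A) *
            W (m.factorial - 2 * A))
      atTop (nhds ((1 - (p : ℚ_[p]) ^ (n + 1)) * Wlim)) :=
  limit_lemma_general p n W Wlim hW
end

section
/- Let p be a prime and n ≥ 2 an even integer. Then, p-adically, lim_{m→∞} ∑_{A=0}^{⌊m!/2⌋} ( binom(m!, A) − binom(m!, A−1) )·p^{(n+1)A} = 1 − p^{n+1} in ℚ_p. -/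
/-!
Put `y = p ^ (n + 1)`, `N = m!` and `P K = ∑_{A ≤ K} C(N, A) y ^ A`. Shifting the index of the
`C(N, A - 1)` terms turns the sum into `P K - y P (K - 1)`. Since `A C(N, A) = N C(N - 1, A - 1)`,
each term `C(N, A) y ^ A` with `A ≥ 1` has norm at most `‖N‖ ‖y‖ ^ A / ‖A‖ ≤ ‖N‖` because
`‖y‖ ≤ p⁻¹`. By the ultrametric inequality `P K` and `P (K - 1)` are then within `‖N‖` of `1`, so
the sum is within `‖m!‖` of `1 - y`, and `‖m!‖ → 0`.
-/

open Filter Topology Finset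

section Ultrametric

variable {K : Type*} [NormedField K] [IsUltrametricDist K]

lemma norm_choose_mul_norm_le (N A : ℕ) : ‖(N.choose A : K)‖ * ‖(A : K)‖ ≤ ‖(N : K)‖ := by
  rcases A with _ | a
  · simp
  rcases N with _ | b
  · simp
  have h : ((b + 1 : ℕ) : K) * (b.choose a : K) =
      ((b + 1).choose (a + 1) : K) * ((a + 1 : ℕ) : K) := by
    rw [← Nat.cast_mul, ← Nat.cast_mul, Nat.add_one_mul_choose_eq]
  rw [← norm_mul, ← h, norm_mul]
  exact mul_le_of_le_one_right (norm_nonneg _) (IsUltrametricDist.norm_natCast_le_one K _)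

end Ultrametric

lemma sum_range_choose_sub_choose_mul_pow {R : Type*} [CommRing R] (N k : ℕ) (y : R) :
    ∑ A ∈ range (k + 2),
        ((((N.choose A : ℤ) - if A = 0 then 0 else (N.choose (A - 1) : ℤ)) : ℤ) : R) * y ^ A =
      ∑ A ∈ range (k + 2), (N.choose A : R) * y ^ A -
        y * ∑ A ∈ range (k + 1), (N.choose A : R) * y ^ A := by
  simp only [Int.cast_sub, Int.cast_natCast, sub_mul, sum_sub_distrib, mul_sum]
  congr 1
  rw [sum_range_succ' _ (k + 1)]
  simp only [Nat.add_one_ne_zero, if_false, if_true, add_tsub_cancel_right, Int.cast_natCast,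
    Int.cast_zero, zero_mul, add_zero]
  exact sum_congr rfl fun _ _ => by ring

namespace Padic

variable {p : ℕ} [hp : Fact p.Prime]

lemma inv_pow_le_norm_natCast {A : ℕ} (hA : A ≠ 0) : (p : ℝ)⁻¹ ^ A ≤ ‖(A : ℚ_[p])‖ := by
  rw [norm_eq_zpow_neg_valuation (Nat.cast_ne_zero.2 hA), valuation_natCast, inv_pow,
    ← zpow_natCast, ← zpow_neg]
  refine zpow_le_zpow_right₀ (by exact_mod_cast hp.out.one_le) (neg_le_neg ?_)
  exact_mod_cast (padicValNat_le_nat_log A).trans (Nat.log_le_self p A)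

lemma norm_choose_mul_pow_le {y : ℚ_[p]} (hy : ‖y‖ ≤ (p : ℝ)⁻¹) (N : ℕ) {A : ℕ} (hA : A ≠ 0) :
    ‖(N.choose A : ℚ_[p]) * y ^ A‖ ≤ ‖(N : ℚ_[p])‖ := by
  calc ‖(N.choose A : ℚ_[p]) * y ^ A‖ ≤ ‖(N.choose A : ℚ_[p])‖ * ‖(A : ℚ_[p])‖ := by
        rw [norm_mul, norm_pow]
        gcongr
        exact (pow_le_pow_left₀ (norm_nonneg y) hy A).trans (inv_pow_le_norm_natCast hA)
    _ ≤ ‖(N : ℚ_[p])‖ := norm_choose_mul_norm_le N A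

lemma norm_sum_choose_mul_pow_sub_one_le {y : ℚ_[p]} (hy : ‖y‖ ≤ (p : ℝ)⁻¹) (N k : ℕ) :
    ‖∑ A ∈ range (k + 1), (N.choose A : ℚ_[p]) * y ^ A - 1‖ ≤ ‖(N : ℚ_[p])‖ := by
  rw [sum_range_succ', Nat.choose_zero_right, Nat.cast_one, pow_zero, mul_one, add_sub_cancel_right]
  exact IsUltrametricDist.norm_sum_le_of_forall_le_of_nonneg (norm_nonneg _)
    fun A _ => norm_choose_mul_pow_le hy N A.succ_ne_zero

lemma norm_sum_choose_sub_choose_mul_pow_sub_le {y : ℚ_[p]} (hy : ‖y‖ ≤ (p : ℝ)⁻¹) (N k : ℕ) :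
    ‖∑ A ∈ range (k + 2),
        ((((N.choose A : ℤ) - if A = 0 then 0 else (N.choose (A - 1) : ℤ)) : ℤ) : ℚ_[p]) * y ^ A -
      (1 - y)‖ ≤ ‖(N : ℚ_[p])‖ := by
  have hy1 : ‖y‖ ≤ 1 := hy.trans (inv_le_one_of_one_le₀ (by exact_mod_cast hp.out.one_le))
  rw [sum_range_choose_sub_choose_mul_pow, sub_sub_sub_comm, ← mul_sub_one, sub_eq_add_neg]
  refine (IsUltrametricDist.norm_add_le_max _ _).trans
    (max_le (norm_sum_choose_mul_pow_sub_one_le hy N (k + 1)) ?_)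
  rw [norm_neg, norm_mul]
  exact (mul_le_of_le_one_left (norm_nonneg _) hy1).trans
    (norm_sum_choose_mul_pow_sub_one_le hy N k)

lemma tendsto_norm_factorial :
    Tendsto (fun m : ℕ => ‖(m.factorial : ℚ_[p])‖) atTop (𝓝 0) := by
  have hlog : Tendsto (Nat.log p) atTop atTop := tendsto_atTop.2 fun k =>
    (eventually_ge_atTop (p ^ k)).mono fun m hm => Nat.le_log_of_pow_le hp.out.one_lt hm
  have hbound : ∀ m ≠ 0, ‖(m.factorial : ℚ_[p])‖ ≤ (p : ℝ)⁻¹ ^ Nat.log p m := by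
    intro m hm
    have hdvd : p ^ Nat.log p m ∣ m.factorial :=
      Nat.dvd_factorial (pow_pos hp.out.pos _) (Nat.pow_log_le_self p hm)
    have := (norm_int_le_pow_iff_dvd (p := p) m.factorial (Nat.log p m)).2 (by exact_mod_cast hdvd)
    simpa [zpow_neg, inv_pow] using this
  refine squeeze_zero' (.of_forall fun _ => norm_nonneg _)
    ((eventually_ne_atTop 0).mono hbound) ?_
  exact (tendsto_pow_atTop_nhds_zero_of_lt_one (by positivity)
    (inv_lt_one_of_one_lt₀ (by exact_mod_cast hp.out.one_lt))).comp hlog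

end Padic

theorem binomial_sum_p_adic_limit_general (p : ℕ) [Fact p.Prime] (n : ℕ) :
    Tendsto
      (fun m : ℕ =>
        ∑ A ∈ Finset.range (m.factorial / 2 + 1),
          ((((m.factorial.choose A : ℤ) -
              if A = 0 then 0 else (m.factorial.choose (A - 1) : ℤ)) : ℤ) : ℚ_[p]) *
            (p : ℚ_[p]) ^ ((n + 1) * A))
      atTop (nhds (1 - (p : ℚ_[p]) ^ (n + 1))) := by
  have hy : ‖(p : ℚ_[p]) ^ (n + 1)‖ ≤ (p : ℝ)⁻¹ := by
    rw [norm_pow, Padic.norm_p]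
    exact pow_le_of_le_one (by positivity)
      (inv_le_one_of_one_le₀ (by exact_mod_cast (Fact.out : p.Prime).one_le)) n.succ_ne_zero
  rw [tendsto_iff_norm_sub_tendsto_zero]
  refine squeeze_zero' (.of_forall fun _ => norm_nonneg _) ?_
    (Padic.tendsto_norm_factorial (p := p))
  filter_upwards [eventually_ge_atTop 2] with m hm
  obtain ⟨k, hk⟩ : ∃ k, m.factorial / 2 + 1 = k + 2 :=
    ⟨m.factorial / 2 - 1, by have := Nat.self_le_factorial m; omega⟩
  simpa only [hk, pow_mul] using Padic.norm_sum_choose_sub_choose_mul_pow_sub_le hy m.factorial k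

/-- Let `p` be a prime and `n ≥ 2` an even integer.  Then, `p`-adically,
`lim_{m→∞} ∑_{A=0}^{⌊m!/2⌋} (binom(m!, A) − binom(m!, A−1)) p^{(n+1)A}
 = 1 − p^{n+1}` in `ℚ_p`, with the convention `binom(a, −1) = 0`. -/
theorem binomial_sum_p_adic_limit (p : ℕ) [Fact p.Prime] (n : ℕ) (hn : 2 ≤ n)
    (hne : Even n) :
    Tendsto
      (fun m : ℕ =>
        ∑ A ∈ Finset.range (m.factorial / 2 + 1),
          ((((m.factorial.choose A : ℤ) -
              if A = 0 then 0 else (m.factorial.choose (A - 1) : ℤ)) : ℤ) : ℚ_[p]) *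
            (p : ℚ_[p]) ^ ((n + 1) * A))
      atTop (nhds (1 - (p : ℚ_[p]) ^ (n + 1))) :=
  binomial_sum_p_adic_limit_general p n
end

section
/- Let p be a prime and let s, t, u be integers with t ≥ 1. (1) If u ≥ 1, then the p-adic limit lim_{m→∞} ∑_{k=0}^{m} p^{u(m−k)}·p^{−(k−s)}·B̃_t(p^{k−s}) exists in ℚ_p and equals B_{t−1}/(1 − p^u). (2) If ε ≥ 1 is an integer with u + ε ≥ 1, then lim_{m→∞} p^{εm}·∑_{k=0}^{m} p^{u(m−k)}·p^{−(k−s)}·B̃_t(p^{k−s}) = 0 in ℚ_p. -/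
/-!
Since `B_t = X · divX B_t + B_t(0)` and the linear coefficient of `B_t` is `t B_{t-1}`, the
quantity `x⁻¹ B̃_t(x)` is a polynomial in `x` with constant term `B_{t-1}`; as `p^{k-s} → 0`
p-adically, `f k := p^{-(k-s)} B̃_t(p^{k-s}) → B_{t-1}`. The sum is the convolution
`∑ r^{m-k} f k` with `r = p^u`, `‖r‖ < 1`, and such convolutions converge to `(lim f) / (1 - r)`.
For (2), `p^{εm} r^{m-k} = (p^{u+ε})^{m-k} (p^ε)^k`, so the same applies to the null sequence
`(p^ε)^k f k`.
-/

open Filter Topology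

/-- `B̃_t(x) := (B_t(x) − B_t)/t`, where `B_t(x)` is the `t`-th Bernoulli
polynomial and `B_t = B_t(0)` the `t`-th Bernoulli number. -/
noncomputable def Btil (t : ℕ) (x : ℚ) : ℚ :=
  ((Polynomial.bernoulli t).eval x - bernoulli t) / t

open Finset Polynomial

theorem tendsto_sum_range_pow_mul_of_tendsto {K : Type*} [NormedField K] [CompleteSpace K]
    {r : K} (hr : ‖r‖ < 1) {f : ℕ → K} {L : K} (hf : Tendsto f atTop (𝓝 L)) :
    Tendsto (fun m => ∑ k ∈ range (m + 1), r ^ (m - k) * f k) atTop (𝓝 (L / (1 - r))) := by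
  obtain ⟨C, hC⟩ := isBounded_iff_forall_norm_le.mp (Metric.isBounded_range_of_tendsto f hf)
  -- Tannery's theorem for the reflected sum `∑ j, r ^ j * f (m - j)`, dominated by `‖r‖ ^ j * C`.
  set F : ℕ → ℕ → K := fun m j => if j ≤ m then r ^ j * f (m - j) else 0
  have hF_tsum (m : ℕ) : ∑ k ∈ range (m + 1), r ^ (m - k) * f k = ∑' j, F m j := by
    rw [tsum_eq_sum (s := range (m + 1)) fun j hj => if_neg (by simpa using hj),
      ← sum_range_reflect]
    refine sum_congr rfl fun j hj => ?_
    have hj : j ≤ m := Nat.lt_succ_iff.mp (mem_range.mp hj)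
    simp [hj, Nat.sub_sub_self hj]
  have hF_lim (j : ℕ) : Tendsto (F · j) atTop (𝓝 (r ^ j * L)) := by
    refine ((hf.comp (tendsto_sub_atTop_nat j)).const_mul (r ^ j)).congr' ?_
    filter_upwards [eventually_ge_atTop j] with m hm
    simp [F, hm]
  have hF_le (m j : ℕ) : ‖F m j‖ ≤ ‖r‖ ^ j * C := by
    by_cases hj : j ≤ m
    · simpa [F, hj, norm_pow] using
        mul_le_mul_of_nonneg_left (hC _ (Set.mem_range_self _)) (pow_nonneg (norm_nonneg r) j)
    · simpa [F, hj] using mul_nonneg (pow_nonneg (norm_nonneg r) j)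
        ((norm_nonneg _).trans (hC _ (Set.mem_range_self 0)))
  have := tendsto_tsum_of_dominated_convergence
    ((summable_geometric_of_lt_one (norm_nonneg r) hr).mul_right C) hF_lim
    (Eventually.of_forall hF_le)
  rw [tsum_mul_right, tsum_geometric_of_norm_lt_one hr, ← div_eq_inv_mul] at this
  exact this.congr fun m => (hF_tsum m).symm

theorem zpow_mul_natCast_mul_zpow_pow_sub {G₀ : Type*} [GroupWithZero G₀] {a : G₀} (ha : a ≠ 0)
    (u ε : ℤ) {k m : ℕ} (hk : k ≤ m) :
    a ^ (ε * (m : ℤ)) * (a ^ u) ^ (m - k) = (a ^ (u + ε)) ^ (m - k) * (a ^ ε) ^ k := by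
  rw [← zpow_natCast, ← zpow_natCast, ← zpow_natCast, ← zpow_mul, ← zpow_mul, ← zpow_mul,
    ← zpow_add₀ ha, ← zpow_add₀ ha, Nat.cast_sub hk]
  ring_nf

theorem eval_zero_divX_bernoulli (t : ℕ) :
    (divX (Polynomial.bernoulli t)).eval 0 = t * _root_.bernoulli (t - 1) := by
  have := congrArg (coeff · 0) (derivative_bernoulli t)
  simp only [coeff_derivative, zero_add, Nat.cast_zero, mul_one, coeff_natCast_mul] at this
  rw [← coeff_zero_eq_eval_zero, coeff_divX, zero_add, this, coeff_zero_eq_eval_zero,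
    bernoulli_eval_zero]

theorem inv_mul_Btil (t : ℕ) {x : ℚ} (hx : x ≠ 0) :
    x⁻¹ * Btil t x = (divX (Polynomial.bernoulli t)).eval x / t := by
  have := X_mul_divX_add (Polynomial.bernoulli t)
  rw [coeff_zero_eq_eval_zero, bernoulli_eval_zero] at this
  conv_lhs => rw [Btil, ← this]
  simp only [eval_add, eval_mul, eval_X, eval_C, add_sub_cancel_right]
  field_simp

theorem Polynomial.tendsto_ratCast_eval {α K : Type*} [Field K] [CharZero K] [TopologicalSpace K]
    [IsTopologicalRing K] (q : ℚ[X]) {l : Filter α} {x : α → ℚ} {a : ℚ}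
    (hx : Tendsto (fun k => (x k : K)) l (𝓝 (a : K))) :
    Tendsto (fun k => ((q.eval (x k) : ℚ) : K)) l (𝓝 ((q.eval a : ℚ) : K)) := by
  have hcast (y : ℚ) : ((q.eval y : ℚ) : K) = (q.map (Rat.castHom K)).eval (y : K) :=
    (eval_map_apply (Rat.castHom K) y).symm
  simp_rw [hcast]
  exact ((q.map (Rat.castHom K)).continuous.tendsto _).comp hx

theorem Padic.tendsto_zpow_natCast_sub (p : ℕ) [Fact p.Prime] (s : ℤ) :
    Tendsto (fun k : ℕ => (((p : ℚ) ^ ((k : ℤ) - s) : ℚ) : ℚ_[p])) atTop (𝓝 0) := by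
  have hp : (p : ℚ_[p]) ≠ 0 := Nat.cast_ne_zero.mpr (Fact.out : p.Prime).ne_zero
  simpa [zpow_sub₀ hp, div_eq_mul_inv, mul_comm] using
    (tendsto_pow_atTop_nhds_zero_of_norm_lt_one Padic.norm_p_lt_one).const_mul
      ((p : ℚ_[p]) ^ s)⁻¹

theorem Padic.norm_p_zpow_lt_one (p : ℕ) [Fact p.Prime] {v : ℤ} (hv : 1 ≤ v) :
    ‖(p : ℚ_[p]) ^ v‖ < 1 := by
  rw [norm_zpow]
  exact zpow_lt_one₀ (norm_pos_iff.mpr (Nat.cast_ne_zero.mpr (Fact.out : p.Prime).ne_zero))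
    Padic.norm_p_lt_one (by omega)

theorem Padic.tendsto_zpow_neg_mul_Btil (p : ℕ) [Fact p.Prime] (s : ℤ) {t : ℕ} (ht : 1 ≤ t) :
    Tendsto (fun k : ℕ => (((p : ℚ) ^ (-((k : ℤ) - s)) * Btil t ((p : ℚ) ^ ((k : ℤ) - s)) : ℚ)
      : ℚ_[p])) atTop (𝓝 ((_root_.bernoulli (t - 1) : ℚ) : ℚ_[p])) := by
  have hp : (p : ℚ) ≠ 0 := Nat.cast_ne_zero.mpr (Fact.out : p.Prime).ne_zero
  have ht0 : (t : ℚ_[p]) ≠ 0 := Nat.cast_ne_zero.mpr (by omega)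
  have := ((divX (Polynomial.bernoulli t)).tendsto_ratCast_eval (a := 0)
    (by rw [Rat.cast_zero]; exact Padic.tendsto_zpow_natCast_sub p s)).div_const (t : ℚ_[p])
  rw [eval_zero_divX_bernoulli, Rat.cast_mul, Rat.cast_natCast, mul_div_cancel_left₀ _ ht0] at this
  refine this.congr fun k => ?_
  rw [zpow_neg, inv_mul_Btil t (zpow_ne_zero _ hp), Rat.cast_div, Rat.cast_natCast]

/-- Let `p` be a prime and `s, t, u` integers with `t ≥ 1`.
(1) If `u ≥ 1`, then `lim_{m→∞} ∑_{k=0}^m p^{u(m−k)} p^{−(k−s)} B̃_t(p^{k−s})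
    = B_{t−1}/(1 − p^u)` in `ℚ_p`.
(2) If `ε ≥ 1` is an integer with `u + ε ≥ 1`, then
    `lim_{m→∞} p^{εm} ∑_{k=0}^m p^{u(m−k)} p^{−(k−s)} B̃_t(p^{k−s}) = 0`. -/
theorem bernoulli_sum_p_adic_limit (p : ℕ) [Fact p.Prime] (s u : ℤ) (t : ℕ)
    (ht : 1 ≤ t) :
    (1 ≤ u →
      Tendsto
        (fun m : ℕ =>
          ((∑ k ∈ Finset.range (m + 1),
              (p : ℚ) ^ (u * ((m : ℤ) - (k : ℤ))) * (p : ℚ) ^ (-((k : ℤ) - s)) *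
                Btil t ((p : ℚ) ^ ((k : ℤ) - s)) : ℚ) : ℚ_[p]))
        atTop (nhds (((bernoulli (t - 1) : ℚ) : ℚ_[p]) / (1 - (p : ℚ_[p]) ^ u)))) ∧
    (∀ ε : ℤ, 1 ≤ ε → 1 ≤ u + ε →
      Tendsto
        (fun m : ℕ =>
          (p : ℚ_[p]) ^ (ε * (m : ℤ)) *
            ((∑ k ∈ Finset.range (m + 1),
                (p : ℚ) ^ (u * ((m : ℤ) - (k : ℤ))) * (p : ℚ) ^ (-((k : ℤ) - s)) *
                  Btil t ((p : ℚ) ^ ((k : ℤ) - s)) : ℚ) : ℚ_[p]))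
        atTop (nhds 0)) := by
  set P : ℚ_[p] := (p : ℚ_[p])
  have hP : P ≠ 0 := Nat.cast_ne_zero.mpr (Fact.out : p.Prime).ne_zero
  set f : ℕ → ℚ_[p] := fun k =>
    (((p : ℚ) ^ (-((k : ℤ) - s)) * Btil t ((p : ℚ) ^ ((k : ℤ) - s)) : ℚ) : ℚ_[p])
  have hf : Tendsto f atTop _ := Padic.tendsto_zpow_neg_mul_Btil p s ht
  have hsum (m : ℕ) : ((∑ k ∈ range (m + 1), (p : ℚ) ^ (u * ((m : ℤ) - (k : ℤ))) *
      (p : ℚ) ^ (-((k : ℤ) - s)) * Btil t ((p : ℚ) ^ ((k : ℤ) - s)) : ℚ) : ℚ_[p]) =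
      ∑ k ∈ range (m + 1), (P ^ u) ^ (m - k) * f k := by
    rw [Rat.cast_sum]
    refine sum_congr rfl fun k hk => ?_
    rw [mul_assoc, Rat.cast_mul, Rat.cast_zpow, Rat.cast_natCast,
      ← Nat.cast_sub (Nat.lt_succ_iff.mp (mem_range.mp hk)), zpow_mul, zpow_natCast]
  refine ⟨fun hu => ?_, fun ε hε huε => ?_⟩
  · simp_rw [hsum]
    exact tendsto_sum_range_pow_mul_of_tendsto (Padic.norm_p_zpow_lt_one p hu) hf
  · have hg : Tendsto (fun k => (P ^ ε) ^ k * f k) atTop (𝓝 0) := by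
      simpa using
        (tendsto_pow_atTop_nhds_zero_of_norm_lt_one (Padic.norm_p_zpow_lt_one p hε)).mul hf
    have hshift (m : ℕ) : P ^ (ε * (m : ℤ)) * ∑ k ∈ range (m + 1), (P ^ u) ^ (m - k) * f k =
        ∑ k ∈ range (m + 1), (P ^ (u + ε)) ^ (m - k) * ((P ^ ε) ^ k * f k) := by
      rw [mul_sum]
      refine sum_congr rfl fun k hk => ?_
      rw [← mul_assoc, ← mul_assoc, zpow_mul_natCast_mul_zpow_pow_sub hP u ε
        (Nat.lt_succ_iff.mp (mem_range.mp hk))]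
    simp_rw [hsum, hshift]
    simpa using
      tendsto_sum_range_pow_mul_of_tendsto (Padic.norm_p_zpow_lt_one p huε) hg
end

section
/- Let a, b, x₁, x₂ ∈ ℂ and let k₁, k₂ ≥ 0 be integers. Assume x₁·(a + t(b−a)) + x₂ ≠ 0 for every t ∈ [0,1] (in particular x₁a+x₂ ≠ 0 and x₁b+x₂ ≠ 0). Then the integral of (b−z)^{k₁}(z−a)^{k₂}/(x₁z+x₂)^{2+k₁+k₂} along the straight segment from a to b, i.e. ∫_0^1 (b−γ(t))^{k₁}(γ(t)−a)^{k₂}/(x₁γ(t)+x₂)^{2+k₁+k₂}·(b−a) dt with γ(t) = a + t(b−a), equals (k₁!·k₂!/(k₁+k₂+1)!)·(b−a)^{k₁+k₂+1}/((x₁a+x₂)^{k₁+1}(x₁b+x₂)^{k₂+1}). -/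
/-!
With `A = x₁ a + x₂` and `B = x₁ b + x₂` we have `x₁ z + x₂ = A + t (B - A)` on the segment, so the
claim is `I(p, q) = p! q! / ((p + q + 1)! A^(p+1) B^(q+1))` for
`I(p, q) = ∫₀¹ t^q (1 - t)^p / (A + t (B - A))^(p+q+2) dt`, `p = k₁`, `q = k₂`.
The function `t^(q+1) (1 - t)^p / (A + t (B - A))^(p+q+1)` vanishes at `t = 0`, and at `t = 1`
unless `p = 0`; integrating its derivative gives `(q + 1) A I(0, q) = 1 / B^(q+1)` and
`(q + 1) A I(p + 1, q) = (p + 1) B I(p, q + 1)`, and induction on `p` finishes.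
-/

open intervalIntegral

theorem hasDerivAt_pow_mul_one_sub_pow_div (A B : ℂ) (p q : ℕ) {w : ℂ}
    (hw : A + w * (B - A) ≠ 0) :
    HasDerivAt (fun w : ℂ => w ^ (q + 1) * (1 - w) ^ p / (A + w * (B - A)) ^ (p + q + 1))
      ((q + 1) * A * (w ^ q * (1 - w) ^ p / (A + w * (B - A)) ^ (p + q + 2))
        - p * B * (w ^ (q + 1) * (1 - w) ^ (p - 1) / (A + w * (B - A)) ^ (p + q + 2))) w := by
  have hnum := ((hasDerivAt_pow (q + 1) w).mul (((hasDerivAt_id w).const_sub 1).pow p))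
  have hden := (((hasDerivAt_id w).mul_const (B - A)).const_add A).pow (p + q + 1)
  refine (hnum.div hden (pow_ne_zero _ hw)).congr_deriv ?_
  simp only [Pi.mul_apply, Pi.pow_apply, id]
  rcases p with _ | p <;>
  · push_cast
    field_simp
    ring

theorem intervalIntegrable_pow_mul_one_sub_pow_div {A B : ℂ}
    (hL : ∀ t ∈ Set.Icc (0 : ℝ) 1, A + t * (B - A) ≠ 0) (p q m : ℕ) :
    IntervalIntegrable (fun t : ℝ => (t : ℂ) ^ q * (1 - t) ^ p / (A + t * (B - A)) ^ m)
      MeasureTheory.volume 0 1 := by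
  refine ContinuousOn.intervalIntegrable ?_
  rw [Set.uIcc_of_le zero_le_one]
  exact (by fun_prop : Continuous _).continuousOn.div (by fun_prop : Continuous _).continuousOn
    fun t ht => pow_ne_zero _ (hL t ht)

noncomputable def feynmanIntegral (A B : ℂ) (p q : ℕ) : ℂ :=
  ∫ t in (0 : ℝ)..1, (t : ℂ) ^ q * (1 - t) ^ p / (A + t * (B - A)) ^ (p + q + 2)

section

variable {A B : ℂ}

theorem feynmanIntegral_integration_by_parts
    (hL : ∀ t ∈ Set.Icc (0 : ℝ) 1, A + t * (B - A) ≠ 0) (p q : ℕ) :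
    (q + 1) * A * feynmanIntegral A B p q
      - p * B * ∫ t in (0 : ℝ)..1,
          (t : ℂ) ^ (q + 1) * (1 - t) ^ (p - 1) / (A + t * (B - A)) ^ (p + q + 2)
      = 0 ^ p / B ^ (p + q + 1) := by
  have hderiv : ∀ t ∈ Set.uIcc (0 : ℝ) 1, HasDerivAt
      (fun t : ℝ => (t : ℂ) ^ (q + 1) * (1 - t) ^ p / (A + t * (B - A)) ^ (p + q + 1))
      ((q + 1) * A * ((t : ℂ) ^ q * (1 - t) ^ p / (A + t * (B - A)) ^ (p + q + 2))
        - p * B * ((t : ℂ) ^ (q + 1) * (1 - t) ^ (p - 1) / (A + t * (B - A)) ^ (p + q + 2))) t :=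
    fun t ht => (hasDerivAt_pow_mul_one_sub_pow_div A B p q
      (hL t (Set.uIcc_of_le (zero_le_one' ℝ) ▸ ht))).comp_ofReal
  have hint := intervalIntegrable_pow_mul_one_sub_pow_div hL
  rw [feynmanIntegral, ← integral_const_mul, ← integral_const_mul,
    ← integral_sub ((hint p q _).const_mul _) ((hint (p - 1) (q + 1) _).const_mul _),
    integral_eq_sub_of_hasDerivAt hderiv
      (((hint p q _).const_mul _).sub ((hint (p - 1) (q + 1) _).const_mul _))]
  simp

theorem feynmanIntegral_zero_left
    (hL : ∀ t ∈ Set.Icc (0 : ℝ) 1, A + t * (B - A) ≠ 0) (q : ℕ) :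
    (q + 1) * A * feynmanIntegral A B 0 q = 1 / B ^ (q + 1) := by
  simpa using feynmanIntegral_integration_by_parts hL 0 q

theorem feynmanIntegral_succ_left
    (hL : ∀ t ∈ Set.Icc (0 : ℝ) 1, A + t * (B - A) ≠ 0) (p q : ℕ) :
    (q + 1) * A * feynmanIntegral A B (p + 1) q = (p + 1) * B * feynmanIntegral A B p (q + 1) := by
  have h := feynmanIntegral_integration_by_parts hL (p + 1) q
  rw [zero_pow p.succ_ne_zero, zero_div, sub_eq_zero, add_tsub_cancel_right,
    show p + 1 + q + 2 = p + (q + 1) + 2 by omega] at h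
  rwa [Nat.cast_add_one] at h

theorem feynmanIntegral_eq
    (hL : ∀ t ∈ Set.Icc (0 : ℝ) 1, A + t * (B - A) ≠ 0) (p q : ℕ) :
    feynmanIntegral A B p q =
      (p.factorial * q.factorial / (p + q + 1).factorial : ℂ) / (A ^ (p + 1) * B ^ (q + 1)) := by
  have hA : A ≠ 0 := by simpa using hL 0 (by simp)
  have hB : B ≠ 0 := by simpa using hL 1 (by simp)
  have hq (q : ℕ) : (q + 1 : ℂ) ≠ 0 := Nat.cast_add_one_ne_zero q
  induction p generalizing q with
  | zero =>
    apply mul_left_cancel₀ (mul_ne_zero (hq q) hA)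
    have hfac : (q.factorial : ℂ) ≠ 0 := Nat.cast_ne_zero.mpr q.factorial_ne_zero
    rw [feynmanIntegral_zero_left hL, zero_add, Nat.factorial_zero, Nat.factorial_succ]
    push_cast
    field_simp
  | succ p ih =>
    apply mul_left_cancel₀ (mul_ne_zero (hq q) hA)
    rw [feynmanIntegral_succ_left hL, ih, show p + (q + 1) + 1 = p + 1 + q + 1 by omega,
      Nat.factorial_succ p, Nat.factorial_succ q]
    push_cast
    field_simp
    ring

end

/-- Feynman parametrization: for `a, b, x₁, x₂ ∈ ℂ` with `x₁ z + x₂ ≠ 0` on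
the segment from `a` to `b`, the integral of
`(b−z)^{k₁}(z−a)^{k₂}/(x₁z+x₂)^{2+k₁+k₂}` along that segment equals
`(k₁! k₂!/(k₁+k₂+1)!) (b−a)^{k₁+k₂+1}/((x₁a+x₂)^{k₁+1}(x₁b+x₂)^{k₂+1})`. -/
theorem feynman_parametrization (a b x₁ x₂ : ℂ) (k₁ k₂ : ℕ)
    (h : ∀ t : ℝ, t ∈ Set.Icc (0 : ℝ) 1 → x₁ * (a + (t : ℂ) * (b - a)) + x₂ ≠ 0) :
    (∫ t in (0 : ℝ)..1,
        (b - (a + (t : ℂ) * (b - a))) ^ k₁ * ((a + (t : ℂ) * (b - a)) - a) ^ k₂ /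
            (x₁ * (a + (t : ℂ) * (b - a)) + x₂) ^ (2 + k₁ + k₂) * (b - a)) =
      ((k₁.factorial : ℂ) * (k₂.factorial : ℂ) / ((k₁ + k₂ + 1).factorial : ℂ)) *
        (b - a) ^ (k₁ + k₂ + 1) /
          ((x₁ * a + x₂) ^ (k₁ + 1) * (x₁ * b + x₂) ^ (k₂ + 1)) := by
  have hdenom (t : ℂ) :
      x₁ * (a + t * (b - a)) + x₂ = x₁ * a + x₂ + t * (x₁ * b + x₂ - (x₁ * a + x₂)) := by ring
  have hL : ∀ t ∈ Set.Icc (0 : ℝ) 1,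
      x₁ * a + x₂ + t * (x₁ * b + x₂ - (x₁ * a + x₂)) ≠ 0 := fun t ht => hdenom t ▸ h t ht
  have hintegrand : ∀ t : ℝ,
      (b - (a + (t : ℂ) * (b - a))) ^ k₁ * ((a + (t : ℂ) * (b - a)) - a) ^ k₂ /
          (x₁ * (a + (t : ℂ) * (b - a)) + x₂) ^ (2 + k₁ + k₂) * (b - a) =
        (b - a) ^ (k₁ + k₂ + 1) * ((t : ℂ) ^ k₂ * (1 - t) ^ k₁ /
          (x₁ * a + x₂ + t * (x₁ * b + x₂ - (x₁ * a + x₂))) ^ (k₁ + k₂ + 2)) := fun t => by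
    rw [hdenom, show b - (a + t * (b - a)) = (1 - t) * (b - a) by ring, add_sub_cancel_left,
      mul_pow, mul_pow]
    ring
  simp_rw [hintegrand]
  rw [integral_const_mul, ← feynmanIntegral, feynmanIntegral_eq hL]
  ring
end

section
/- Let n ≥ 2 be an even integer, p a prime, and k ≥ 0 an integer. Then for every s ∈ ℂ with Re(s) > n+1 one has (1/p^k)·∑_{j=0}^{p^k−1} ∫_0^∞ (E_{n+2}((iy+j)/p^k) − 1)·y^s dy = (2·Γ(s+1)/(ζ(−1−n)·(2π)^{s+1}))·∑_{μ=1}^{∞} σ_{n+1}(p^k·μ)/μ^{s+1}, where Γ is the Gamma function and the series on the right converges absolutely. -/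
/-!
With `P = p ^ k`, the function `y ↦ E_{n+2}((iy + j)/P) - 1` is the exponential series
`(2/ζ(-1-n)) ∑_{m ≥ 1} σ_{n+1}(m) e^{2πimj/P} e^{-2πmy/P}`. Its Mellin transform is computed
termwise, each term contributing a Gamma integral `Γ(s+1) (P/2πm)^{s+1}`; the interchange is
justified because `σ_{n+1}(m) ≤ ζ(n+1) m^{n+1}` makes `∑ σ_{n+1}(m) m^{-Re s-1}` converge for
`Re s > n + 1`. Averaging over `j`, the orthogonality of the `P`-th roots of unity keeps exactly
the terms with `P ∣ m`, and substituting `m = Pμ` gives the right-hand side.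
-/

open Complex Real MeasureTheory Set

noncomputable def Eis (n : ℕ) (z : ℂ) : ℂ :=
  1 + (2 / riemannZeta (-1 - (n : ℂ))) *
    ∑' k : ℕ, ((∑ d ∈ (k + 1).divisors, d ^ (n + 1) : ℕ) : ℂ) *
      Complex.exp (2 * (π : ℂ) * Complex.I * ((k : ℂ) + 1) * z)

section Mellin

variable {s : ℂ} {a : ℝ}

theorem mellinConvergent_exp_neg_mul (hs : 0 < s.re) (ha : 0 < a) :
    MellinConvergent (fun t : ℝ => cexp (-(a * t))) s := by
  have h1 : MellinConvergent (fun t : ℝ => cexp (-t)) s := by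
    simpa only [MellinConvergent, smul_eq_mul, mul_comm, ofReal_exp, ofReal_neg]
      using Complex.GammaIntegral_convergent hs
  simpa only [ofReal_mul] using (MellinConvergent.comp_mul_left ha).mpr h1

theorem mellin_exp_neg_mul (hs : 0 < s.re) (ha : 0 < a) :
    mellin (fun t : ℝ => cexp (-(a * t))) s = (1 / a) ^ s * Gamma s :=
  integral_cpow_mul_exp_neg_mul_Ioi hs ha

theorem integral_norm_cpow_mul_exp_neg_mul (hs : 0 < s.re) (ha : 0 < a) :
    ∫ t in Ioi (0 : ℝ), ‖(t : ℂ) ^ (s - 1) * cexp (-(a * t))‖ =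
      (1 / a) ^ s.re * Real.Gamma s.re := by
  rw [← integral_rpow_mul_exp_neg_mul_Ioi hs ha]
  refine setIntegral_congr_fun measurableSet_Ioi fun t (ht : 0 < t) => ?_
  rw [norm_mul, norm_cpow_eq_rpow_re_of_pos ht, norm_exp, ← ofReal_mul, ← ofReal_neg, ofReal_re,
    sub_re, one_re]

theorem summable_mul_one_div_cpow {ι : Type*} {a : ι → ℝ} {b : ι → ℂ}
    (ha : ∀ i, 0 < a i) (hb : Summable fun i => ‖b i‖ * (1 / a i) ^ s.re) :
    Summable fun i => b i * (1 / a i : ℂ) ^ s := by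
  refine Summable.of_norm (hb.congr fun i => ?_)
  rw [norm_mul, ← ofReal_one, ← ofReal_div, norm_cpow_eq_rpow_re_of_pos (by simpa using ha i)]

theorem mellin_tsum_mul_exp_neg_mul {ι : Type*} [Countable ι] {a : ι → ℝ} {b : ι → ℂ}
    (hs : 0 < s.re) (ha : ∀ i, 0 < a i) (hb : Summable fun i => ‖b i‖ * (1 / a i) ^ s.re) :
    mellin (fun t : ℝ => ∑' i, b i * cexp (-(a i * t))) s =
      Gamma s * ∑' i, b i * (1 / a i) ^ s := by
  set F : ι → ℝ → ℂ := fun i t => b i * ((t : ℂ) ^ (s - 1) * cexp (-(a i * t)))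
  have hint : ∀ i, IntegrableOn (F i) (Ioi 0) := fun i =>
    (mellinConvergent_exp_neg_mul hs (ha i)).const_mul (b i)
  have hnorm : Summable fun i => ∫ t in Ioi (0 : ℝ), ‖F i t‖ := by
    refine (hb.mul_right (Real.Gamma s.re)).congr fun i => ?_
    simp only [F, norm_mul (b i), integral_const_mul,
      integral_norm_cpow_mul_exp_neg_mul hs (ha i), mul_assoc]
  calc mellin (fun t : ℝ => ∑' i, b i * cexp (-(a i * t))) s
      = ∑' i, ∫ t in Ioi (0 : ℝ), F i t := by
        rw [integral_tsum_of_summable_integral_norm hint hnorm, mellin]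
        refine setIntegral_congr_fun measurableSet_Ioi fun t _ => ?_
        rw [smul_eq_mul, ← tsum_mul_left]
        exact tsum_congr fun i => by ring
    _ = ∑' i, b i * ((1 / a i) ^ s * Gamma s) := tsum_congr fun i => by
        rw [integral_const_mul, ← mellin_exp_neg_mul hs (ha i)]
        rfl
    _ = Gamma s * ∑' i, b i * (1 / a i) ^ s := by
        rw [← tsum_mul_left]
        exact tsum_congr fun i => by ring

end Mellin

theorem sum_range_exp_two_pi_I_mul_div {P : ℕ} (hP : 0 < P) (q : ℕ) :
    ∑ j ∈ Finset.range P, cexp (2 * π * I * q * j / P) = if P ∣ q then (P : ℂ) else 0 := by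
  have hζ := Complex.isPrimitiveRoot_exp P hP.ne'
  have hpow : ∀ j : ℕ, cexp (2 * π * I * q * j / P) = (cexp (2 * π * I / P) ^ q) ^ j := by
    intro j
    rw [← pow_mul, ← Complex.exp_nat_mul]
    push_cast
    ring_nf
  simp_rw [hpow]
  split_ifs with h
  · simp [(hζ.pow_eq_one_iff_dvd q).mpr h]
  · rw [geom_sum_eq (mt (hζ.pow_eq_one_iff_dvd q).mp h), ← pow_mul, mul_comm q, pow_mul,
      hζ.pow_eq_one, one_pow, sub_self, zero_div]

theorem tsum_ite_dvd_succ {α : Type*} [AddCommMonoid α] [TopologicalSpace α] {P : ℕ}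
    (hP : 0 < P) (g : ℕ → α) :
    ∑' m : ℕ, (if P ∣ m + 1 then g (m + 1) else 0) = ∑' μ : ℕ, g (P * (μ + 1)) := by
  have hpos : ∀ μ, 0 < P * (μ + 1) := fun μ => by positivity
  have hinj : Function.Injective fun μ : ℕ => P * (μ + 1) - 1 := fun μ ν h => by
    have := hpos μ
    have := hpos ν
    have h' : P * (μ + 1) = P * (ν + 1) := by simp only at h; omega
    simpa using Nat.eq_of_mul_eq_mul_left hP h'
  rw [← hinj.tsum_eq]
  · refine tsum_congr fun μ => ?_
    rw [Nat.sub_add_cancel (hpos μ), if_pos (dvd_mul_right _ _)]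
  · intro m hm
    obtain ⟨c, hc⟩ : P ∣ m + 1 := by by_contra h; exact hm (if_neg h)
    refine ⟨c - 1, ?_⟩
    have hc0 : c ≠ 0 := by rintro rfl; simp at hc
    simp only
    rw [Nat.sub_add_cancel (Nat.one_le_iff_ne_zero.mpr hc0), ← hc, Nat.add_sub_cancel]

open ArithmeticFunction
open scoped ArithmeticFunction.sigma

section DivisorSums

variable {k : ℕ}

theorem sigma_le_tsum_mul_pow (hk : 2 ≤ k) (m : ℕ) :
    (σ k m : ℝ) ≤ (∑' d : ℕ, 1 / (d : ℝ) ^ k) * m ^ k := by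
  have hsum : Summable fun d : ℕ => 1 / (d : ℝ) ^ k := Real.summable_one_div_nat_pow.mpr hk
  calc (σ k m : ℝ) = ∑ d ∈ m.divisors, (((m / d : ℕ) : ℝ)) ^ k := by
        rw [sigma_eq_sum_div]; push_cast; rfl
    _ ≤ ∑ d ∈ m.divisors, 1 / (d : ℝ) ^ k * m ^ k := by
        gcongr with d
        calc (((m / d : ℕ) : ℝ)) ^ k ≤ ((m : ℝ) / d) ^ k := by gcongr; exact Nat.cast_div_le
          _ = 1 / (d : ℝ) ^ k * m ^ k := by ring
    _ = (∑ d ∈ m.divisors, 1 / (d : ℝ) ^ k) * m ^ k := by rw [Finset.sum_mul]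
    _ ≤ (∑' d : ℕ, 1 / (d : ℝ) ^ k) * m ^ k := by
        gcongr
        exact hsum.sum_le_tsum _ fun d _ => by positivity

theorem summable_sigma_div_rpow (hk : 2 ≤ k) {r : ℝ} (hr : k + 1 < r) :
    Summable fun m : ℕ => (σ k m : ℝ) / (m : ℝ) ^ r := by
  set C := ∑' d : ℕ, 1 / (d : ℝ) ^ k
  have hC : Summable fun m : ℕ => C * (m : ℝ) ^ ((k : ℝ) - r) :=
    (Real.summable_nat_rpow.mpr (by linarith)).mul_left C
  refine hC.of_nonneg_of_le (fun m => by positivity) fun m => ?_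
  rcases m.eq_zero_or_pos with rfl | hm
  · simpa using mul_nonneg (tsum_nonneg fun d => by positivity) (Real.rpow_nonneg le_rfl _)
  · have hm' : (0 : ℝ) < m := Nat.cast_pos.mpr hm
    rw [Real.rpow_sub hm', Real.rpow_natCast, ← mul_div_assoc]
    gcongr
    exact sigma_le_tsum_mul_pow hk m

theorem summable_sigma_mul_succ_div_rpow (hk : 2 ≤ k) {r : ℝ} (hr : k + 1 < r) {P : ℕ}
    (hP : 0 < P) : Summable fun μ : ℕ => (σ k (P * (μ + 1)) : ℝ) / ((μ : ℝ) + 1) ^ r := by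
  have hinj : Function.Injective fun μ : ℕ => P * (μ + 1) := fun μ ν h => by
    simpa using Nat.eq_of_mul_eq_mul_left hP h
  refine (((summable_sigma_div_rpow hk hr).comp_injective hinj).mul_left ((P : ℝ) ^ r)).congr
    fun μ => ?_
  simp only [Function.comp_apply, Nat.cast_mul, Nat.cast_add, Nat.cast_one]
  rw [Real.mul_rpow (by positivity) (by positivity)]
  field_simp

end DivisorSums

section Eisenstein

variable {n P : ℕ} {s : ℂ}

theorem Eis_sub_one_eq_tsum (j : ℕ) (y : ℝ) :
    Eis n ((I * y + j) / P) - 1 = 2 / riemannZeta (-1 - n) * ∑' m : ℕ,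
      σ (n + 1) (m + 1) * cexp (2 * π * I * (m + 1 : ℕ) * j / P) *
        cexp (-((2 * π * (m + 1 : ℕ) / P : ℝ) * y)) := by
  rw [Eis, add_sub_cancel_left]
  congr 1
  refine tsum_congr fun m => ?_
  rw [sigma_apply, mul_assoc _ (cexp _), ← Complex.exp_add]
  congr 2
  push_cast
  ring_nf
  rw [I_sq]
  ring

theorem summable_norm_sigma_mul_exp_mul_rpow (hn : 1 ≤ n) (hP : 0 < P) (j : ℕ) {r : ℝ}
    (hr : n + 2 < r) :
    Summable fun m : ℕ =>
      ‖(σ (n + 1) (m + 1) : ℂ) * cexp (2 * π * I * (m + 1 : ℕ) * j / P)‖ *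
        (1 / (2 * π * (m + 1 : ℕ) / P)) ^ r := by
  have h := (summable_sigma_mul_succ_div_rpow (k := n + 1) (by omega) (by push_cast; linarith)
    one_pos).mul_left (((P : ℝ) / (2 * π)) ^ r)
  refine h.congr fun m => ?_
  have hunit : ‖cexp (2 * π * I * (m + 1 : ℕ) * j / P)‖ = 1 := by
    rw [norm_exp]
    simp
  rw [norm_mul, hunit, Complex.norm_natCast, mul_one, one_mul,
    show 1 / (2 * π * (m + 1 : ℕ) / P) = (P : ℝ) / (2 * π) / (m + 1 : ℕ) by field_simp,
    Real.div_rpow (x := (P : ℝ) / (2 * π)) (by positivity) (by positivity)]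
  push_cast
  ring

theorem integral_Eis_sub_one_mul_cpow (hn : 1 ≤ n) (hP : 0 < P) (hs : n + 1 < s.re) (j : ℕ) :
    ∫ y in Ioi (0 : ℝ), (Eis n ((I * y + j) / P) - 1) * (y : ℂ) ^ s =
      2 / riemannZeta (-1 - n) * (Gamma (s + 1) * ∑' m : ℕ,
        σ (n + 1) (m + 1) * cexp (2 * π * I * (m + 1 : ℕ) * j / P) *
          (1 / (2 * π * (m + 1 : ℕ) / P : ℝ)) ^ (s + 1)) := by
  have hre : (s + 1).re = s.re + 1 := by simp
  have hmellin : ∫ y in Ioi (0 : ℝ), (Eis n ((I * y + j) / P) - 1) * (y : ℂ) ^ s =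
      2 / riemannZeta (-1 - n) * mellin (fun y : ℝ => ∑' m : ℕ,
        σ (n + 1) (m + 1) * cexp (2 * π * I * (m + 1 : ℕ) * j / P) *
          cexp (-((2 * π * (m + 1 : ℕ) / P : ℝ) * y))) (s + 1) := by
    rw [mellin, ← integral_const_mul]
    refine setIntegral_congr_fun measurableSet_Ioi fun y _ => ?_
    rw [Eis_sub_one_eq_tsum, add_sub_cancel_right, smul_eq_mul]
    ring
  rw [hmellin, mellin_tsum_mul_exp_neg_mul (by rw [hre]; linarith) (fun m => by positivity)]
  rw [hre]
  exact summable_norm_sigma_mul_exp_mul_rpow hn hP j (by linarith)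

theorem one_div_cpow_two_pi_mul (hP : 0 < P) (μ : ℕ) (s : ℂ) :
    (1 / (2 * π * (P * (μ + 1) : ℕ) / P : ℝ) : ℂ) ^ s =
      ((2 * (π : ℂ)) ^ s)⁻¹ * (((μ : ℂ) + 1) ^ s)⁻¹ := by
  have h : (2 * π * (P * (μ + 1) : ℕ) / P : ℝ) = (2 * π) * ((μ : ℝ) + 1) := by
    push_cast
    field_simp
  have harg : arg ((2 * π * ((μ : ℝ) + 1) : ℝ) : ℂ) ≠ π := by
    rw [arg_ofReal_of_nonneg (by positivity)]
    exact pi_ne_zero.symm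
  rw [h, one_div, inv_cpow _ _ harg, ofReal_mul,
    mul_cpow_ofReal_nonneg (by positivity) (by positivity), mul_inv]
  push_cast
  rfl

theorem sum_range_tsum_sigma_mul_exp_mul_cpow (hn : 1 ≤ n) (hP : 0 < P) (hs : n + 1 < s.re) :
    ∑ j ∈ Finset.range P, ∑' m : ℕ,
        σ (n + 1) (m + 1) * cexp (2 * π * I * (m + 1 : ℕ) * j / P) *
          (1 / (2 * π * (m + 1 : ℕ) / P : ℝ)) ^ (s + 1) =
      P * ((2 * (π : ℂ)) ^ (s + 1))⁻¹ *
        ∑' μ : ℕ, σ (n + 1) (P * (μ + 1)) / ((μ : ℂ) + 1) ^ (s + 1) := by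
  have hre : (s + 1).re = s.re + 1 := by simp
  have hsum : ∀ j : ℕ, Summable fun m : ℕ =>
      σ (n + 1) (m + 1) * cexp (2 * π * I * (m + 1 : ℕ) * j / P) *
        (1 / (2 * π * (m + 1 : ℕ) / P : ℝ)) ^ (s + 1) := fun j =>
    summable_mul_one_div_cpow (fun m => by positivity)
      (by rw [hre]; exact summable_norm_sigma_mul_exp_mul_rpow hn hP j (by linarith))
  rw [← Summable.tsum_finsetSum fun j _ => hsum j]
  simp_rw [← Finset.sum_mul, ← Finset.mul_sum, sum_range_exp_two_pi_I_mul_div hP, mul_ite,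
    ite_mul, mul_zero, zero_mul]
  rw [tsum_ite_dvd_succ hP fun q =>
    (σ (n + 1) q : ℂ) * P * (1 / (2 * π * q / P : ℝ) : ℂ) ^ (s + 1)]
  rw [← tsum_mul_left]
  refine tsum_congr fun μ => ?_
  rw [one_div_cpow_two_pi_mul hP]
  ring

end Eisenstein

theorem eisenstein_mellin_sum_general (n : ℕ) (hn : 2 ≤ n)
    (p : ℕ) (hp : p.Prime) (k : ℕ) (s : ℂ) (hs : (n : ℝ) + 1 < s.re) :
    Summable
      (fun μ : ℕ =>
        ‖((∑ d ∈ (p ^ k * (μ + 1)).divisors, d ^ (n + 1) : ℕ) : ℂ) /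
          ((μ : ℂ) + 1) ^ (s + 1)‖) ∧
    (1 / (p : ℂ) ^ k) *
        ∑ j ∈ Finset.range (p ^ k),
          ∫ y in Set.Ioi (0 : ℝ),
            (Eis n ((Complex.I * (y : ℂ) + (j : ℂ)) / (p : ℂ) ^ k) - 1) * (y : ℂ) ^ s =
      (2 * Complex.Gamma (s + 1) /
          (riemannZeta (-1 - (n : ℂ)) * (2 * (π : ℂ)) ^ (s + 1))) *
        ∑' μ : ℕ,
          ((∑ d ∈ (p ^ k * (μ + 1)).divisors, d ^ (n + 1) : ℕ) : ℂ) /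
            ((μ : ℂ) + 1) ^ (s + 1) := by
  have hP : 0 < p ^ k := pow_pos hp.pos k
  simp_rw [← sigma_apply]
  refine ⟨?_, ?_⟩
  · refine (summable_sigma_mul_succ_div_rpow (k := n + 1) (r := s.re + 1) (by omega)
      (by push_cast; linarith) hP).congr fun μ => ?_
    rw [norm_div, Complex.norm_natCast, ← Nat.cast_succ (R := ℂ),
      norm_natCast_cpow_of_pos μ.succ_pos]
    simp
  · have hpk : (p : ℂ) ^ k = ((p ^ k : ℕ) : ℂ) := by push_cast; rfl
    rw [hpk, Finset.sum_congr rfl fun j _ => integral_Eis_sub_one_mul_cpow (by omega) hP hs j,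
      ← Finset.mul_sum, ← Finset.mul_sum,
      sum_range_tsum_sigma_mul_exp_mul_cpow (by omega) hP hs]
    have hP' : ((p ^ k : ℕ) : ℂ) ≠ 0 := by exact_mod_cast hP.ne'
    field_simp

/-- Let `n ≥ 2` be even, `p` prime, `k ≥ 0`.  For every `s ∈ ℂ` with
`Re(s) > n + 1`, one has
`(1/p^k) ∑_{j=0}^{p^k−1} ∫_0^∞ (E_{n+2}((iy+j)/p^k) − 1) y^s dy
 = (2 Γ(s+1)/(ζ(−1−n) (2π)^{s+1})) ∑_{μ≥1} σ_{n+1}(p^k μ)/μ^{s+1}`,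
and the series on the right converges absolutely. -/
theorem eisenstein_mellin_sum (n : ℕ) (hn : 2 ≤ n) (hne : Even n)
    (p : ℕ) (hp : p.Prime) (k : ℕ) (s : ℂ) (hs : (n : ℝ) + 1 < s.re) :
    Summable
      (fun μ : ℕ =>
        ‖((∑ d ∈ (p ^ k * (μ + 1)).divisors, d ^ (n + 1) : ℕ) : ℂ) /
          ((μ : ℂ) + 1) ^ (s + 1)‖) ∧
    (1 / (p : ℂ) ^ k) *
        ∑ j ∈ Finset.range (p ^ k),
          ∫ y in Set.Ioi (0 : ℝ),
            (Eis n ((Complex.I * (y : ℂ) + (j : ℂ)) / (p : ℂ) ^ k) - 1) * (y : ℂ) ^ s =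
      (2 * Complex.Gamma (s + 1) /
          (riemannZeta (-1 - (n : ℂ)) * (2 * (π : ℂ)) ^ (s + 1))) *
        ∑' μ : ℕ,
          ((∑ d ∈ (p ^ k * (μ + 1)).divisors, d ^ (n + 1) : ℕ) : ℂ) /
            ((μ : ℂ) + 1) ^ (s + 1) :=
  eisenstein_mellin_sum_general n hn p hp k s hs
end

section
/- Let p be a prime, k ≥ 0 an integer, and a ≥ 1, e ≥ 1 integers. For an integer j with 0 ≤ j ≤ p^k − 1, let l := min(v_p(j), k) (with the convention l := k when j = 0, where v_p denotes the p-adic valuation), let j' := j/p^l, and let d := d_{k−l}(j'), where for N ≥ 1 and an integer a' coprime to p, d_N(a') denotes the unique integer with 1 ≤ d_N(a') < p^N and a'·d_N(a') ≡ 1 (mod p^N), and d_0 := 0. Then ∑_{j=0}^{p^k−1} p^{l·a}·d^{e} = ∑_{l'=0}^{k−1} p^{l'·a}·( B̃_{e+1}(p^{k−l'}) − p^{e}·B̃_{e+1}(p^{k−l'−1}) ). -/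
/-- `l := min(v_p(j), k)`, with the convention `l := k` when `j = 0`. -/
def lexp (p k j : ℕ) : ℕ :=
  if j = 0 then k else min (padicValNat p j) k

/-! Write `j ≠ 0` as `p ^ l * m` with `l < k` and `p ∤ m`; the `j = 0` term vanishes as
`e ≥ 1`. For fixed `l`, inversion modulo `p ^ N`, `N = k - l`, permutes the residues prime to `p`,
so the inner sum of `d ^ e` is the sum of `m ^ e` over units `m < p ^ N`. That is the full power
sum below `p ^ N` minus `p ^ e` times the power sum below `p ^ (N - 1)`, a difference of `B̃`
values. -/

open Finset

theorem Btil_succ_natCast (e M : ℕ) : Btil (e + 1) M = ∑ j ∈ range M, (j : ℚ) ^ e := by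
  have h := Polynomial.sum_range_pow_eq_bernoulli_sub M e
  rw [Nat.succ_eq_add_one] at h
  rw [Btil, ← h]
  push_cast
  exact mul_div_cancel_left₀ _ (by positivity)

theorem sum_range_mul_filter_dvd {M : Type*} [AddCommMonoid M] {p : ℕ} (hp : 0 < p) (n : ℕ)
    (g : ℕ → M) : ∑ m ∈ range (p * n) with p ∣ m, g m = ∑ q ∈ range n, g (p * q) := by
  have himage : {m ∈ range (p * n) | p ∣ m} = (range n).image (p * ·) := by
    ext m
    simp only [mem_filter, mem_range, mem_image]
    constructor
    · rintro ⟨hm, q, rfl⟩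
      exact ⟨q, Nat.lt_of_mul_lt_mul_left hm, rfl⟩
    · rintro ⟨q, hq, rfl⟩
      exact ⟨Nat.mul_lt_mul_of_pos_left hq hp, dvd_mul_right p q⟩
  rw [himage, sum_image fun _ _ _ _ h => Nat.eq_of_mul_eq_mul_left hp h]

theorem sum_range_pow_eq_add_sum_not_dvd {M : Type*} [AddCommMonoid M] {p : ℕ} (hp : 0 < p)
    (k : ℕ) (g : ℕ → M) :
    ∑ j ∈ range (p ^ k), g j =
      g 0 + ∑ l ∈ range k, ∑ m ∈ range (p ^ (k - l)) with ¬ p ∣ m, g (p ^ l * m) := by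
  induction k generalizing g with
  | zero => simp
  | succ k ih =>
    rw [pow_succ', ← sum_filter_add_sum_filter_not _ (p ∣ ·), sum_range_mul_filter_dvd hp, ih,
      sum_range_succ', add_assoc]
    simp only [Nat.add_sub_add_right, pow_succ', mul_assoc, mul_zero, pow_zero, one_mul,
      Nat.sub_zero]

theorem eq_of_mul_modEq_one {n x x' y : ℕ} (hx : x * y ≡ 1 [MOD n]) (hx' : x' * y ≡ 1 [MOD n])
    (hxn : x < n) (hx'n : x' < n) : x = x' :=
  Nat.ModEq.eq_of_lt_of_lt (calc
    x = x * 1 := (mul_one x).symm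
    _ ≡ x * (x' * y) [MOD n] := hx'.symm.mul_left x
    _ = x' * (x * y) := by ring
    _ ≡ x' * 1 [MOD n] := hx.mul_left x'
    _ = x' := mul_one x') hxn hx'n

theorem sum_comp_modInverse {M : Type*} [AddCommMonoid M] {n : ℕ} (d : ℕ → ℕ)
    (hd : ∀ x, x.Coprime n → d x < n ∧ x * d x ≡ 1 [MOD n]) (f : ℕ → M) :
    ∑ m ∈ range n with m.Coprime n, f (d m) = ∑ m ∈ range n with m.Coprime n, f m := by
  have hmaps : ∀ m ∈ {m ∈ range n | m.Coprime n}, d m ∈ {m ∈ range n | m.Coprime n} := by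
    intro m hm
    simp only [mem_filter, mem_range] at hm ⊢
    obtain ⟨hlt, hmod⟩ := hd m hm.2
    exact ⟨hlt, Nat.coprime_of_mul_modEq_one m (by rwa [mul_comm])⟩
  have hinv : ∀ m ∈ {m ∈ range n | m.Coprime n}, d (d m) = m := by
    intro m hm
    have hdm := mem_filter.mp (hmaps m hm)
    have hm := mem_filter.mp hm
    exact eq_of_mul_modEq_one (by rw [mul_comm]; exact (hd _ hdm.2).2) (hd m hm.2).2
      (hd _ hdm.2).1 (mem_range.mp hm.1)
  exact sum_nbij' d d hmaps hmaps hinv hinv fun _ _ => rfl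

theorem sum_range_pow_not_dvd {p : ℕ} (hp : 0 < p) (e : ℕ) {N : ℕ} (hN : N ≠ 0) :
    ∑ m ∈ range (p ^ N) with ¬ p ∣ m, (m : ℚ) ^ e =
      Btil (e + 1) ((p : ℚ) ^ N) - (p : ℚ) ^ e * Btil (e + 1) ((p : ℚ) ^ (N - 1)) := by
  have hpN : p ^ N = p * p ^ (N - 1) := by
    rw [← pow_succ', Nat.sub_add_cancel (Nat.one_le_iff_ne_zero.mpr hN)]
  rw [← Nat.cast_pow p N, ← Nat.cast_pow p (N - 1), Btil_succ_natCast, Btil_succ_natCast,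
    hpN, eq_sub_iff_add_eq, ← sum_filter_not_add_sum_filter (range (p * p ^ (N - 1))) (p ∣ ·),
    sum_range_mul_filter_dvd hp, mul_sum]
  simp only [Nat.cast_mul, mul_pow]

theorem sum_modInverse_pow_not_dvd {p : ℕ} (hp : p.Prime) (e : ℕ) {N : ℕ} (hN : N ≠ 0)
    (d : ℕ → ℕ) (hd : ∀ x, x.Coprime p → d x < p ^ N ∧ x * d x ≡ 1 [MOD p ^ N]) :
    ∑ m ∈ range (p ^ N) with ¬ p ∣ m, (d m : ℚ) ^ e =
      Btil (e + 1) ((p : ℚ) ^ N) - (p : ℚ) ^ e * Btil (e + 1) ((p : ℚ) ^ (N - 1)) := by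
  have hcoprime : ∀ m, m.Coprime (p ^ N) ↔ ¬ p ∣ m := fun m =>
    (Nat.coprime_pow_right_iff (Nat.pos_of_ne_zero hN) m p).trans
      (Nat.coprime_comm.trans hp.coprime_iff_not_dvd)
  simp_rw [← hcoprime]
  rw [sum_comp_modInverse d (fun x hx => hd x (hx.coprime_dvd_right (dvd_pow_self p hN)))
    fun m => (m : ℚ) ^ e]
  simp_rw [hcoprime]
  exact sum_range_pow_not_dvd hp.pos e hN

theorem lexp_pow_mul {p k l m : ℕ} (hp : p.Prime) (hm : ¬ p ∣ m) (hl : l ≤ k) :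
    lexp p k (p ^ l * m) = l := by
  have := Fact.mk hp
  have hm0 : m ≠ 0 := by rintro rfl; exact hm (dvd_zero p)
  have hpl : p ^ l ≠ 0 := pow_ne_zero l hp.ne_zero
  rw [lexp, if_neg (mul_ne_zero hpl hm0), padicValNat.mul hpl hm0, padicValNat.prime_pow,
    padicValNat.eq_zero_of_not_dvd hm, add_zero, min_eq_left hl]

theorem power_sum_modular_inverses_general (p : ℕ) (hp : p.Prime) (k a e : ℕ)
    (he : 1 ≤ e) (D : ℕ → ℕ → ℕ)
    (hD0 : ∀ x, D 0 x = 0)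
    (hD : ∀ N x, 1 ≤ N → Nat.Coprime x p →
      1 ≤ D N x ∧ D N x < p ^ N ∧ x * D N x ≡ 1 [MOD p ^ N]) :
    ∑ j ∈ Finset.range (p ^ k),
        (p : ℚ) ^ (lexp p k j * a) *
          ((D (k - lexp p k j) (j / p ^ lexp p k j) : ℕ) : ℚ) ^ e =
      ∑ l ∈ Finset.range k,
        (p : ℚ) ^ (l * a) *
          (Btil (e + 1) ((p : ℚ) ^ (k - l)) -
            (p : ℚ) ^ e * Btil (e + 1) ((p : ℚ) ^ (k - l - 1))) := by
  rw [sum_range_pow_eq_add_sum_not_dvd hp.pos]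
  have hzero :
      (p : ℚ) ^ (lexp p k 0 * a) * (D (k - lexp p k 0) (0 / p ^ lexp p k 0) : ℚ) ^ e = 0 := by
    simp [lexp, hD0, zero_pow (by omega : e ≠ 0)]
  rw [hzero, zero_add]
  refine sum_congr rfl fun l hl => ?_
  have hlk : l < k := mem_range.mp hl
  calc _ = ∑ m ∈ range (p ^ (k - l)) with ¬ p ∣ m,
        (p : ℚ) ^ (l * a) * (D (k - l) m : ℚ) ^ e :=
        sum_congr rfl fun m hm => by
          rw [lexp_pow_mul hp (mem_filter.mp hm).2 hlk.le,
            Nat.mul_div_cancel_left _ (pow_pos hp.pos l)]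
    _ = _ := by
      rw [← mul_sum, sum_modInverse_pow_not_dvd hp e (by omega) (D (k - l))
        fun x hx => (hD _ x (by omega) hx).2]

/-- Power-sum-over-modular-inverses identity: let `p` be prime, `k ≥ 0`,
`a, e ≥ 1`.  For `0 ≤ j ≤ p^k − 1` set `l := min(v_p(j), k)` (with `l := k`
for `j = 0`), `j' := j/p^l`, and `d := d_{k−l}(j')`, where `d_N(a')` is the
unique integer with `1 ≤ d_N(a') < p^N` and `a' d_N(a') ≡ 1 (mod p^N)`, and
`d_0 := 0`.  Then
`∑_{j=0}^{p^k−1} p^{la} d^e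
 = ∑_{l'=0}^{k−1} p^{l'a} (B̃_{e+1}(p^{k−l'}) − p^e B̃_{e+1}(p^{k−l'−1}))`. -/
theorem power_sum_modular_inverses (p : ℕ) (hp : p.Prime) (k a e : ℕ)
    (ha : 1 ≤ a) (he : 1 ≤ e) (D : ℕ → ℕ → ℕ)
    (hD0 : ∀ x, D 0 x = 0)
    (hD : ∀ N x, 1 ≤ N → Nat.Coprime x p →
      1 ≤ D N x ∧ D N x < p ^ N ∧ x * D N x ≡ 1 [MOD p ^ N]) :
    ∑ j ∈ Finset.range (p ^ k),
        (p : ℚ) ^ (lexp p k j * a) *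
          ((D (k - lexp p k j) (j / p ^ lexp p k j) : ℕ) : ℚ) ^ e =
      ∑ l ∈ Finset.range k,
        (p : ℚ) ^ (l * a) *
          (Btil (e + 1) ((p : ℚ) ^ (k - l)) -
            (p : ℚ) ^ e * Btil (e + 1) ((p : ℚ) ^ (k - l - 1))) :=
  power_sum_modular_inverses_general p hp k a e he D hD0 hD
end

section
/- Let p be a prime and n ≥ 0 an integer. For a homogeneous polynomial f(X₁, X₂) of degree n with coefficients in 𝔽_p = ℤ/pℤ, define (f|T)(X₁, X₂) := f(0, X₂) + ∑_{j=0}^{p−1} f(X₁ + jX₂, 0), which is again homogeneous of degree n. Then for every homogeneous f of degree n over 𝔽_p, the polynomial (f|T)|T is a scalar multiple of X₂^n, i.e. there exists c ∈ 𝔽_p with (f|T)|T = c·X₂^n. -/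
/-!
Substituting `T f` at a point `(x, 0)` gives `f(0, 0) + p • f(x, 0) = f(0, 0)`, independent of
`x`, so the `p` equal terms `(T f)(X₁ + kX₂, 0)` of `T (T f)` cancel in characteristic `p`. What
remains is `f(0, X₂) + ∑ⱼ f(jX₂, 0)`, and by homogeneity each of these terms is a multiple of
`X₂ⁿ`.
-/

open MvPolynomial

/-- The mod-`p` Hecke operator at `p` on two-variable polynomials over `𝔽_p`:
`(f|T)(X₁, X₂) := f(0, X₂) + ∑_{j=0}^{p−1} f(X₁ + jX₂, 0)`. -/
noncomputable def heckeTp (p : ℕ) (f : MvPolynomial (Fin 2) (ZMod p)) :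
    MvPolynomial (Fin 2) (ZMod p) :=
  aeval ![0, X 1] f +
    ∑ j ∈ Finset.range p, aeval ![X 0 + C ((j : ZMod p)) * X 1, 0] f

theorem MvPolynomial.IsHomogeneous.aeval_algebraMap_mul {R S σ : Type*} [CommSemiring R]
    [CommSemiring S] [Algebra R S] {φ : MvPolynomial σ R} {n : ℕ} (hφ : φ.IsHomogeneous n)
    (c : σ → R) (y : S) :
    MvPolynomial.aeval (fun i => algebraMap R S (c i) * y) φ =
      algebraMap R S (eval c φ) * y ^ n := by
  conv_lhs => rw [φ.as_sum]
  conv_rhs => rw [φ.as_sum]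
  simp only [map_sum, aeval_monomial, eval_monomial, Finset.sum_mul]
  refine Finset.sum_congr rfl fun d hd => ?_
  have hdeg : d.degree = n := by
    rw [Finsupp.degree_eq_weight_one]
    exact hφ (mem_support_iff.mp hd)
  have hy : (d.prod fun _ e => y ^ e) = y ^ n := by
    rw [← hdeg, Finsupp.prod, Finset.prod_pow_eq_pow_sum, Finsupp.degree_apply]
  simp only [map_mul, Finsupp.prod_mul, mul_pow, hy, map_finsuppProd, map_pow, mul_assoc]

theorem sum_range_const_eq_zero {p : ℕ} {A : Type*} [AddCommGroup A] [Module (ZMod p) A]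
    (x : A) : ∑ _j ∈ Finset.range p, x = 0 := by
  rw [Finset.sum_const, Finset.card_range, ← Nat.cast_smul_eq_nsmul (ZMod p), ZMod.natCast_self,
    zero_smul]

section aeval

variable {p : ℕ} {S : Type*} [CommRing S] [Algebra (ZMod p) S]

theorem aeval_heckeTp (g : Fin 2 → S) (f : MvPolynomial (Fin 2) (ZMod p)) :
    aeval g (heckeTp p f) = aeval ![0, g 1] f +
      ∑ j ∈ Finset.range p, aeval ![g 0 + algebraMap (ZMod p) S j * g 1, 0] f := by
  simp only [heckeTp, map_add, map_sum, comp_aeval_apply]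
  congr 1
  · congr 1; ext i; fin_cases i <;> simp
  · refine Finset.sum_congr rfl fun j _ => ?_
    congr 1; ext i; fin_cases i <;> simp

theorem aeval_heckeTp_of_snd_eq_zero {g : Fin 2 → S} (hg : g 1 = 0)
    (f : MvPolynomial (Fin 2) (ZMod p)) :
    aeval g (heckeTp p f) = aeval ![0, 0] f := by
  simp only [aeval_heckeTp, hg, mul_zero, add_zero, sum_range_const_eq_zero]

end aeval

theorem heckeTp_heckeTp (p : ℕ) (f : MvPolynomial (Fin 2) (ZMod p)) :
    heckeTp p (heckeTp p f) =
      aeval ![0, X 1] f + ∑ j ∈ Finset.range p, aeval ![C (j : ZMod p) * X 1, 0] f := by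
  conv_lhs => rw [heckeTp]
  simp only [aeval_heckeTp_of_snd_eq_zero, Matrix.cons_val_one, Matrix.cons_val_fin_one,
    sum_range_const_eq_zero, add_zero, aeval_heckeTp]
  simp [algebraMap_eq]

theorem hecke_square_lands_on_X2_general (p : ℕ) (n : ℕ)
    (f : MvPolynomial (Fin 2) (ZMod p)) (hf : f.IsHomogeneous n) :
    ∃ c : ZMod p, heckeTp p (heckeTp p f) = C c * (X 1) ^ n := by
  have hscale (c : Fin 2 → ZMod p) :
      aeval (![C (c 0) * X 1, C (c 1) * X 1] : Fin 2 → MvPolynomial (Fin 2) (ZMod p)) f =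
        C (eval c f) * X 1 ^ n := by
    rw [← algebraMap_eq, ← hf.aeval_algebraMap_mul]
    congr 2; funext i; fin_cases i <;> rfl
  refine ⟨eval ![0, 1] f + ∑ j ∈ Finset.range p, eval ![(j : ZMod p), 0] f, ?_⟩
  rw [heckeTp_heckeTp, map_add, map_sum, add_mul, Finset.sum_mul]
  congr 1
  · simpa using hscale ![0, 1]
  · exact Finset.sum_congr rfl fun j _ => by simpa using hscale ![(j : ZMod p), 0]

/-- For every homogeneous polynomial `f` of degree `n` over `𝔽_p`, the
polynomial `(f|T)|T` is a scalar multiple of `X₂^n`. -/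
theorem hecke_square_lands_on_X2 (p : ℕ) (hp : p.Prime) (n : ℕ)
    (f : MvPolynomial (Fin 2) (ZMod p)) (hf : f.IsHomogeneous n) :
    ∃ c : ZMod p, heckeTp p (heckeTp p f) = C c * (X 1) ^ n :=
  hecke_square_lands_on_X2_general p n f hf
end

section
/- Let p be a prime and m ≥ 2 an even integer, and write ζ(1−m) = −B_m/m ∈ ℚ (a nonzero rational number), with numerator N_m > 0 and denominator J_m > 0 in lowest terms. (1) If m is not divisible by p−1, then p does not divide J_m; equivalently, ord_p(ζ(1−m)) = ord_p(N_m). (2) If p−1 divides m, then p does not divide N_m, i.e. ord_p(N_m) = 0. -/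
/-- `ζ(1−m) = −B_m/m` as a rational number, for `m ≥ 1`. -/
noncomputable def zetaVal (m : ℕ) : ℚ :=
  -(bernoulli m) / (m : ℚ)

/-- `N_m`: the (positive) numerator of `ζ(1−m) = −B_m/m`. -/
noncomputable def Nzeta (m : ℕ) : ℕ :=
  (zetaVal m).num.natAbs

/-!
The `p`-adic size of `B_m/m` is controlled from two sides.

For even `m` with `(p - 1) ∣ m`, von Staudt–Clausen (`Bernoulli.vonStaudt_clausen`) says that
`B_m + 1/p` is `p`-integral, so `|B_m|_p = p` and `p` divides the denominator of `B_m/m`; being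
coprime to it, the numerator is prime to `p`.

If `(p - 1) ∤ m` we prove Adams' theorem `|B_m|_p ≤ |m|_p`. Faulhaber's formula with `n = p^N`
expresses `p^N B_m` as the power sum `∑_{k < p^N} k^m` plus terms that are small because `p B_i`
is `p`-integral. Choosing `g` with `g^m ≢ 1 (mod p)`, multiplication by `g` permutes the residues
mod `p^N`, and `a ≡ b (mod p^N)` implies `a^m ≡ b^m (mod p^(N + v_p(m)))`; hence
`(g^m - 1) ∑_{k < p^N} k^m ≡ 0 (mod p^(N + v_p(m)))`.
-/

open Finset

theorem pow_add_dvd_pow_sub_pow {R : Type*} [CommRing R] {π a b : R} {N k m : ℕ}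
    (hk : k ≤ N) (hm : π ^ k ∣ (m : R)) (hab : π ^ N ∣ a - b) :
    π ^ (N + k) ∣ a ^ m - b ^ m := by
  have hsq := sq_dvd_add_pow_sub_sub (a - b) b m
  rw [add_sub_cancel] at hsq
  have hsplit : a ^ m - b ^ m =
      (a ^ m - b ^ (m - 1) * (a - b) * m - b ^ m) + b ^ (m - 1) * ((a - b) * m) := by ring
  rw [hsplit, pow_add]
  refine dvd_add ?_ (dvd_mul_of_dvd_right (mul_dvd_mul hab hm) _)
  calc π ^ N * π ^ k ∣ (π ^ N) ^ 2 := by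
        rw [← pow_add, ← pow_mul]; exact pow_dvd_pow _ (by omega)
    _ ∣ (a - b) ^ 2 := pow_dvd_pow_of_dvd hab 2
    _ ∣ _ := hsq

theorem ZMod.exists_unit_pow_ne_one {p m : ℕ} [Fact p.Prime] (hm : ¬ (p - 1) ∣ m) :
    ∃ x : (ZMod p)ˣ, x ^ m ≠ 1 := by
  by_contra! h
  apply hm
  rw [← ZMod.card_units p, ← Nat.card_eq_fintype_card, ← IsCyclic.exponent_eq_card]
  exact Monoid.exponent_dvd_of_forall_pow_eq_one h

theorem sum_range_eq_sum_zmod_val {M : Type*} [AddCommMonoid M] (n : ℕ) [NeZero n]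
    (f : ℕ → M) :
    ∑ k ∈ range n, f k = ∑ x : ZMod n, f x.val :=
  (Finset.sum_nbij' (fun x : ZMod n => x.val) (fun k => (k : ZMod n))
    (fun x _ => mem_range.mpr x.val_lt) (fun _ _ => mem_univ _)
    (fun x _ => ZMod.natCast_zmod_val x) (fun _ hk => ZMod.val_cast_of_lt (mem_range.mp hk))
    (fun _ _ => rfl)).symm

theorem sum_range_pow_eq_mul_bernoulli_add (n m : ℕ) :
    ∑ k ∈ range n, (k : ℚ) ^ m = n * bernoulli m +
      ∑ i ∈ range m,
        bernoulli i * m.choose i * (n : ℚ) ^ (m + 1 - i) / (m + 1 - i : ℕ) := by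
  rw [sum_range_pow, sum_range_succ, add_comm]
  congr 1
  · rw [Nat.choose_succ_self_right, Nat.add_sub_cancel_left, pow_one]
    field_simp
    push_cast
    ring
  · refine sum_congr rfl fun i hi => ?_
    have hi : i < m + 1 := by have := mem_range.mp hi; omega
    have hchoose : (m.choose i : ℚ) * (m + 1) = (m + 1).choose i * (m + 1 - i : ℕ) := by
      exact_mod_cast Nat.choose_mul_succ_eq m i
    rw [div_eq_div_iff (by positivity) (by norm_cast; omega)]
    linear_combination (bernoulli i * (n : ℚ) ^ (m + 1 - i)) * hchoose.symm

theorem padicNorm_natCast_eq_zpow {p n : ℕ} (hn : n ≠ 0) :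
    padicNorm p n = (p : ℚ) ^ (-(padicValNat p n : ℤ)) := by
  rw [padicNorm.eq_zpow_of_nonzero (by exact_mod_cast hn), padicValRat.of_nat]

variable {p : ℕ} [hp : Fact p.Prime]

theorem pow_add_padicValNat_dvd_sum_range_pow {m N : ℕ} (hm : ¬ (p - 1) ∣ m)
    (hN : padicValNat p m ≤ N) :
    (p : ℤ) ^ (N + padicValNat p m) ∣ ∑ k ∈ range (p ^ N), (k : ℤ) ^ m := by
  obtain ⟨x, hx⟩ := ZMod.exists_unit_pow_ne_one hm
  set g := (x : ZMod p).val
  have hgm : ¬ (p : ℤ) ∣ (g : ℤ) ^ m - 1 := by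
    rw [← ZMod.intCast_zmod_eq_zero_iff_dvd]
    push_cast
    rw [ZMod.natCast_zmod_val, sub_eq_zero]
    exact fun h => hx (Units.val_eq_one.mp (by simpa using h))
  have : NeZero (p ^ N) := ⟨pow_ne_zero _ hp.out.ne_zero⟩
  let u := ZMod.unitOfCoprime g ((ZMod.val_coe_unit_coprime x).pow_right N)
  rw [sum_range_eq_sum_zmod_val]
  have hperm : ∑ y : ZMod (p ^ N), (((u * y : ZMod (p ^ N)).val : ℤ)) ^ m =
      ∑ y : ZMod (p ^ N), ((y.val : ℕ) : ℤ) ^ m :=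
    Fintype.sum_equiv (Units.mulLeft u) _ _ fun _ => rfl
  have hterm (y : ZMod (p ^ N)) : (p : ℤ) ^ (N + padicValNat p m) ∣
      ((g : ℤ) * y.val) ^ m - ((u * y : ZMod (p ^ N)).val : ℤ) ^ m := by
    refine pow_add_dvd_pow_sub_pow hN (mod_cast pow_padicValNat_dvd) ?_
    rw [← Nat.cast_pow, ← ZMod.intCast_eq_intCast_iff_dvd_sub]
    simp [u]
  have hmul : (p : ℤ) ^ (N + padicValNat p m) ∣
      ((g : ℤ) ^ m - 1) * ∑ y : ZMod (p ^ N), ((y.val : ℕ) : ℤ) ^ m := by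
    have hsum := dvd_sum fun y (_ : y ∈ univ) => hterm y
    rw [sum_sub_distrib, hperm] at hsum
    rw [sub_one_mul, mul_sum]
    simpa only [mul_pow] using hsum
  have hcop : IsCoprime ((p : ℤ) ^ (N + padicValNat p m)) ((g : ℤ) ^ m - 1) :=
    ((Nat.prime_iff_prime_int.mp hp.out).coprime_iff_not_dvd.mpr hgm).pow_left
  exact hcop.dvd_of_dvd_mul_left hmul

theorem padicNorm_prime_pow (k : ℕ) : padicNorm p ((p : ℚ) ^ k) = (p : ℚ) ^ (-(k : ℤ)) := by
  rw [← Nat.cast_pow, padicNorm_natCast_eq_zpow (pow_ne_zero _ hp.out.ne_zero),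
    padicValNat.prime_pow]

theorem padicNorm_inv_prime : padicNorm p (p : ℚ)⁻¹ = p := by
  rw [inv_eq_one_div, padicNorm.div, padicNorm.one, padicNorm.padicNorm_p_of_prime, one_div,
    inv_inv]

theorem padicNorm_sum_one_div_le_one {s : Finset ℕ} (hs : ∀ q ∈ s, q.Prime ∧ q ≠ p) :
    padicNorm p (∑ q ∈ s, (1 : ℚ) / q) ≤ 1 := by
  refine padicNorm.sum_le' (fun q hq => ?_) zero_le_one
  obtain ⟨hq_prime, hqp⟩ := hs q hq
  have hpq : ¬ p ∣ q := fun h => hqp ((Nat.prime_dvd_prime_iff_eq hp.out hq_prime).mp h).symm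
  rw [padicNorm.div, padicNorm.one, (padicNorm.nat_eq_one_iff q).mpr hpq, div_one]

theorem padicNorm_bernoulli_add_inv_le_one {m : ℕ} (hm : Even m) (hm0 : m ≠ 0) :
    padicNorm p (bernoulli m + if (p - 1) ∣ m then (p : ℚ)⁻¹ else 0) ≤ 1 := by
  obtain ⟨k, rfl⟩ := hm
  rw [← two_mul] at hm0 ⊢
  obtain ⟨z, hz⟩ := Bernoulli.vonStaudt_clausen k
  set S := (range (2 * k + 2)).filter fun q => q.Prime ∧ (q - 1) ∣ 2 * k
  have hmem : p ∈ S ↔ (p - 1) ∣ 2 * k := by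
    simp only [S, mem_filter, mem_range, hp.out, true_and, and_iff_right_iff_imp]
    intro h
    have := Nat.le_of_dvd (by omega) h
    omega
  have hsplit : ∑ q ∈ S, (1 : ℚ) / q =
      (if (p - 1) ∣ 2 * k then (p : ℚ)⁻¹ else 0) + ∑ q ∈ S.erase p, (1 : ℚ) / q := by
    split_ifs with hd
    · rw [← add_sum_erase S _ (hmem.mpr hd), one_div]
    · rw [erase_eq_of_notMem (mt hmem.mp hd), zero_add]
  have hrest : ∀ q ∈ S.erase p, q.Prime ∧ q ≠ p := fun q hq =>
    ⟨(mem_filter.mp (mem_of_mem_erase hq)).2.1, ne_of_mem_erase hq⟩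
  have heq : bernoulli (2 * k) + (if (p - 1) ∣ 2 * k then (p : ℚ)⁻¹ else 0) =
      z - ∑ q ∈ S.erase p, (1 : ℚ) / q := by
    rw [hz, hsplit]; ring
  rw [heq]
  exact padicNorm.sub.trans (max_le (padicNorm.of_int z) (padicNorm_sum_one_div_le_one hrest))

theorem padicNorm_bernoulli_le (n : ℕ) : padicNorm p (bernoulli n) ≤ p := by
  have hp1 : (1 : ℚ) ≤ p := by exact_mod_cast hp.out.one_le
  rcases Nat.even_or_odd n with hn | hn
  · rcases eq_or_ne n 0 with rfl | hn0
    · rwa [bernoulli_zero, padicNorm.one]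
    have hc : padicNorm p (if (p - 1) ∣ n then (p : ℚ)⁻¹ else 0) ≤ p := by
      split_ifs
      · exact padicNorm_inv_prime.le
      · rw [padicNorm.zero]; positivity
    rw [← add_sub_cancel_right (bernoulli n) (if (p - 1) ∣ n then (p : ℚ)⁻¹ else 0)]
    exact padicNorm.sub.trans (max_le ((padicNorm_bernoulli_add_inv_le_one hn hn0).trans hp1) hc)
  · rcases eq_or_ne n 1 with rfl | hn1
    · rw [bernoulli_one, neg_div, padicNorm.neg, ← Nat.cast_two, padicNorm.div, padicNorm.one]
      rcases eq_or_ne p 2 with rfl | hp2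
      · rw [padicNorm.padicNorm_p_of_prime, one_div, inv_inv]
      · have h2 : ¬ p ∣ 2 := fun h =>
          hp2 ((Nat.prime_dvd_prime_iff_eq hp.out Nat.prime_two).mp h)
        rwa [(padicNorm.nat_eq_one_iff 2).mpr h2, div_one]
    · have hn3 : 1 < n := by obtain ⟨k, rfl⟩ := hn; omega
      rw [bernoulli_eq_zero_of_odd hn hn3, padicNorm.zero]
      positivity

theorem padicNorm_bernoulli_of_sub_one_dvd {m : ℕ} (hm : Even m) (hm0 : m ≠ 0)
    (hd : (p - 1) ∣ m) :
    padicNorm p (bernoulli m) = p := by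
  have h := padicNorm_bernoulli_add_inv_le_one (p := p) hm hm0
  rw [if_pos hd] at h
  have hlt : padicNorm p (bernoulli m + (p : ℚ)⁻¹) ≠ padicNorm p (-(p : ℚ)⁻¹) := by
    rw [padicNorm.neg, padicNorm_inv_prime]
    exact (h.trans_lt (by exact_mod_cast hp.out.one_lt)).ne
  rw [← add_neg_cancel_right (bernoulli m) (p : ℚ)⁻¹, padicNorm.add_eq_max_of_ne hlt,
    padicNorm.neg, padicNorm_inv_prime, max_eq_right (h.trans (by exact_mod_cast hp.out.one_le))]

theorem padicNorm_faulhaber_term_le {m i N : ℕ} (hi : i < m) (hN : padicValNat p m + 2 ≤ N) :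
    padicNorm p (bernoulli i * m.choose i * ((p : ℚ) ^ N) ^ (m + 1 - i) / (m + 1 - i : ℕ)) ≤
      (p : ℚ) ^ (-(N + padicValNat p m : ℤ)) := by
  set j := m + 1 - i
  have hj : 2 ≤ j := by omega
  have hvj : padicValNat p j < j := Nat.padicValNat_lt_self (by omega)
  have hp0 : (p : ℚ) ≠ 0 := by exact_mod_cast hp.out.ne_zero
  rw [padicNorm.div, padicNorm.mul, padicNorm.mul, ← pow_mul, padicNorm_prime_pow,
    padicNorm_natCast_eq_zpow (n := j) (by omega)]
  calc _ ≤ p * 1 * (p : ℚ) ^ (-((N * j : ℕ) : ℤ)) /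
          (p : ℚ) ^ (-(padicValNat p j : ℤ)) := by
        gcongr
        exacts [padicNorm.nonneg _, padicNorm_bernoulli_le i, padicNorm.of_nat _]
    _ = (p : ℚ) ^ (1 + -((N * j : ℕ) : ℤ) - -(padicValNat p j : ℤ)) := by
        rw [mul_one, zpow_sub₀ hp0, zpow_one_add₀ hp0]
    _ ≤ _ := by
        refine zpow_le_zpow_right₀ (by exact_mod_cast hp.out.one_le) ?_
        have hN' : (padicValNat p m : ℤ) + 2 ≤ N := by exact_mod_cast hN
        have hvj' : (padicValNat p j : ℤ) + 1 ≤ j := by exact_mod_cast hvj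
        have hj' : (2 : ℤ) ≤ j := by exact_mod_cast hj
        rw [Nat.cast_mul]
        nlinarith [mul_nonneg (show (0 : ℤ) ≤ N - 1 by omega)
          (show (0 : ℤ) ≤ j - 2 by omega)]

/-- Adams' theorem. With `N = v_p(m) + 2` the Faulhaber tail for `n = p^N` is as small as the
power sum. -/
theorem padicNorm_bernoulli_div_le_one {m : ℕ} (hm : ¬ (p - 1) ∣ m) :
    padicNorm p (bernoulli m / m) ≤ 1 := by
  have hm0 : m ≠ 0 := by rintro rfl; exact hm (dvd_zero _)
  set v := padicValNat p m
  set N := v + 2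
  have hp0 : (p : ℚ) ≠ 0 := by exact_mod_cast hp.out.ne_zero
  have hfaulhaber := sum_range_pow_eq_mul_bernoulli_add (p ^ N) m
  have hsum :
      padicNorm p (∑ k ∈ range (p ^ N), (k : ℚ) ^ m) ≤ (p : ℚ) ^ (-(N + v : ℤ)) := by
    have h := (padicNorm.dvd_iff_norm_le (n := N + v)
      (z := ∑ k ∈ range (p ^ N), (k : ℤ) ^ m)).mp
      (by rw [Nat.cast_pow]; exact pow_add_padicValNat_dvd_sum_range_pow hm (by omega))
    simpa only [Int.cast_sum, Int.cast_pow, Int.cast_natCast, Nat.cast_add] using h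
  have htail : padicNorm p (∑ i ∈ range m, bernoulli i * m.choose i *
      ((p ^ N : ℕ) : ℚ) ^ (m + 1 - i) / (m + 1 - i : ℕ)) ≤ (p : ℚ) ^ (-(N + v : ℤ)) :=
    padicNorm.sum_le' (fun i hi => by
      exact_mod_cast padicNorm_faulhaber_term_le (mem_range.mp hi) le_rfl) (by positivity)
  have hmain : padicNorm p ((p : ℚ) ^ N * bernoulli m) ≤ (p : ℚ) ^ (-(N + v : ℤ)) := by
    rw [← Nat.cast_pow, eq_sub_of_add_eq hfaulhaber.symm]
    exact padicNorm.sub.trans (max_le hsum htail)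
  rw [padicNorm.mul, padicNorm_prime_pow, mul_comm, ← le_div_iff₀ (by positivity),
    ← zpow_sub₀ hp0] at hmain
  rw [padicNorm.div, padicNorm_natCast_eq_zpow hm0, div_le_one (by positivity)]
  convert hmain using 2
  ring

theorem padicNorm_le_one_iff_not_dvd_den (q : ℚ) : padicNorm p q ≤ 1 ↔ ¬ p ∣ q.den := by
  conv_lhs => rw [← Rat.num_div_den q, padicNorm.div]
  by_cases hden : p ∣ q.den
  · have hnum : ¬ (p : ℤ) ∣ q.num := fun h =>
      Nat.not_coprime_of_dvd_of_dvd hp.out.one_lt (Int.natCast_dvd.mp h) hden q.reduced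
    have hden_pos : 0 < padicNorm p q.den :=
      (padicNorm.nonneg _).lt_of_ne' (padicNorm.nonzero (mod_cast q.den_ne_zero))
    rw [(padicNorm.int_eq_one_iff _).mpr hnum, iff_false_intro (not_not.mpr hden), iff_false,
      not_le]
    exact one_lt_one_div hden_pos ((padicNorm.nat_lt_one_iff _).mpr hden)
  · rw [(padicNorm.nat_eq_one_iff _).mpr hden, div_one]
    simp only [hden, not_false_eq_true, iff_true]
    exact padicNorm.of_int _

theorem one_lt_padicNorm_bernoulli_div {m : ℕ} (hm : Even m) (hm0 : m ≠ 0)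
    (hd : (p - 1) ∣ m) :
    1 < padicNorm p (bernoulli m / m) := by
  have hnorm_m : 0 < padicNorm p m := by
    rw [padicNorm_natCast_eq_zpow hm0]; exact zpow_pos (by exact_mod_cast hp.out.pos) _
  rw [padicNorm.div, padicNorm_bernoulli_of_sub_one_dvd hm hm0 hd, lt_div_iff₀ hnorm_m, one_mul]
  exact (padicNorm.of_nat m).trans_lt (by exact_mod_cast hp.out.one_lt)

/-- Let `p` be a prime and `m ≥ 2` even, and write `ζ(1−m) = N_m/J_m` in
lowest terms (`N_m` up to sign, `J_m = ` the denominator).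
(1) If `(p−1) ∤ m` then `p ∤ J_m`; equivalently
    `ord_p(ζ(1−m)) = ord_p(N_m)`.
(2) If `(p−1) ∣ m` then `p ∤ N_m`, i.e. `ord_p(N_m) = 0`. -/
theorem zeta_value_p_divisibility (p : ℕ) (hp : p.Prime) (m : ℕ)
    (hm : 2 ≤ m) (hme : Even m) :
    (¬ (p - 1) ∣ m →
      ¬ p ∣ (zetaVal m).den ∧
        padicValRat p (zetaVal m) = (padicValNat p (Nzeta m) : ℤ)) ∧
    ((p - 1) ∣ m → ¬ p ∣ Nzeta m ∧ padicValNat p (Nzeta m) = 0) := by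
  have : Fact p.Prime := ⟨hp⟩
  have hnorm : padicNorm p (zetaVal m) = padicNorm p (bernoulli m / m) := by
    rw [zetaVal, neg_div, padicNorm.neg]
  refine ⟨fun hnd => ?_, fun hd => ?_⟩
  · have hden : ¬ p ∣ (zetaVal m).den := (padicNorm_le_one_iff_not_dvd_den _).mp
      (hnorm ▸ padicNorm_bernoulli_div_le_one hnd)
    refine ⟨hden, ?_⟩
    rw [padicValRat, padicValNat.eq_zero_of_not_dvd hden, Nat.cast_zero, sub_zero]
    rfl
  · have hden : p ∣ (zetaVal m).den := not_not.mp <| mt (padicNorm_le_one_iff_not_dvd_den _).mpr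
      (hnorm ▸ (one_lt_padicNorm_bernoulli_div hme (by omega) hd).not_ge)
    have hnum : ¬ p ∣ Nzeta m := fun h =>
      Nat.not_coprime_of_dvd_of_dvd hp.one_lt h hden (zetaVal m).reduced
    exact ⟨hnum, padicValNat.eq_zero_of_not_dvd hnum⟩
end

section
/- Let N ≥ 1 be an integer and p a prime. Let Γ₁(Np) := { (a b; c d) ∈ SL₂(ℤ) : a ≡ d ≡ 1 and c ≡ 0 (mod Np) } and Γ(p) := { γ ∈ SL₂(ℤ) : γ ≡ Id (mod p) }. Then the subgroup of SL₂(ℤ) generated by the set { γ = (a b; c d) ∈ Γ₁(Np) : γ ∉ Γ(p) and |a+d| > 2 } is equal to Γ₁(Np). In particular, Γ₁(Np) is generated by hyperbolic elements not lying in Γ(p). -/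
/-!
Put `M = N * p`, `q = p` and `L m := !![1, 0; m, 1]`. The elements `T * L M`, `L M * T`
and `T * L (2 * M)` are hyperbolic elements of `Γ₁(M)` with upper-right entry `1`, and
`(T * L M) * (L M * T) = (T * L (2 * M)) * T` puts `T` in the group they generate.
Any `γ ∈ Γ₁(M)` with lower-left entry `c ≠ 0` becomes hyperbolic and non-trivial modulo `q`
after right multiplication by a suitable `T ^ n`, since the trace of `γ * T ^ n` is
`tr γ + c * n`. If `c = 0`, then `γ * (T * L M)` has lower-left entry `± M ≠ 0`.
-/

open CongruenceSubgroup ModularGroup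
open scoped MatrixGroups

def lowerUnipotent (m : ℤ) : SL(2, ℤ) :=
  ⟨!![1, 0; m, 1], by simp [Matrix.det_fin_two_of]⟩

@[simp]
lemma coe_lowerUnipotent (m : ℤ) :
    (lowerUnipotent m : Matrix (Fin 2) (Fin 2) ℤ) = !![1, 0; m, 1] := rfl

lemma lowerUnipotent_add (m n : ℤ) :
    lowerUnipotent (m + n) = lowerUnipotent m * lowerUnipotent n := by
  ext : 1
  simp

lemma T_zpow_mem_Gamma1 (M : ℕ) (n : ℤ) : T ^ n ∈ Gamma1 M := by
  simp [coe_T_zpow]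

lemma Gamma1_le_Gamma1_of_dvd {q M : ℕ} (h : q ∣ M) : Gamma1 M ≤ Gamma1 q := by
  intro γ hγ
  rw [Gamma1_mem] at hγ ⊢
  have reduce (k : ℤ) : (k : ZMod q) = ZMod.castHom h (ZMod q) k := by simp
  simp only [reduce, hγ, map_one, map_zero, and_self]

lemma exists_two_lt_abs_add_mul (a : ℤ) {b : ℤ} (hb : b ≠ 0) : ∃ k : ℤ, 2 < |a + b * k| := by
  refine ⟨b * (|a| + 3), lt_of_lt_of_le ?_ (le_abs_self _)⟩
  have : 1 ≤ b * b := by nlinarith [Int.one_le_abs hb, abs_mul_abs_self b]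
  nlinarith [neg_abs_le a, abs_nonneg a]

def gamma1HyperbolicOutside (M q : ℕ) : Set SL(2, ℤ) :=
  {γ | γ ∈ Gamma1 M ∧ γ ∉ Gamma q ∧ 2 < |γ 0 0 + γ 1 1|}

section

variable {M q : ℕ}

lemma T_mul_lowerUnipotent_mem {m : ℤ} (hm : (m : ZMod M) = 0) (hm0 : 0 < m) (hq : q ≠ 1) :
    T * lowerUnipotent m ∈ gamma1HyperbolicOutside M q := by
  have : Nontrivial (ZMod q) := ZMod.nontrivial_iff.2 hq
  refine ⟨?_, fun h => ?_, ?_⟩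
  · simp [hm]
  · simpa using (Gamma_mem.1 h).2.1
  · simpa using lt_abs.2 (.inl (by omega : (2 : ℤ) < 1 + m + 1))

lemma lowerUnipotent_mul_T_mem {m : ℤ} (hm : (m : ZMod M) = 0) (hm0 : 0 < m) (hq : q ≠ 1) :
    lowerUnipotent m * T ∈ gamma1HyperbolicOutside M q := by
  have : Nontrivial (ZMod q) := ZMod.nontrivial_iff.2 hq
  refine ⟨?_, fun h => ?_, ?_⟩
  · simp [hm]
  · simpa using (Gamma_mem.1 h).2.1
  · simpa using lt_abs.2 (.inl (by omega : (2 : ℤ) < 1 + (m + 1)))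

lemma T_mem_closure_gamma1HyperbolicOutside (hM : M ≠ 0) (hq : q ≠ 1) :
    T ∈ Subgroup.closure (gamma1HyperbolicOutside M q) := by
  have hM0 : (0 : ℤ) < M := by omega
  have mem {x} (hx : x ∈ gamma1HyperbolicOutside M q) := Subgroup.subset_closure hx
  have hTL := mem (T_mul_lowerUnipotent_mem (by simp) hM0 hq)
  have hLT := mem (lowerUnipotent_mul_T_mem (by simp) hM0 hq)
  have hTL2 := mem (T_mul_lowerUnipotent_mem (m := M + M) (by simp) (by omega) hq)
  have hT : T = (T * lowerUnipotent (M + M))⁻¹ *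
      ((T * lowerUnipotent M) * (lowerUnipotent M * T)) := by
    rw [lowerUnipotent_add]
    group
  rw [hT]
  exact mul_mem (inv_mem hTL2) (mul_mem hTL hLT)

lemma exists_mul_T_zpow_mem_gamma1HyperbolicOutside (hM : M ≠ 0) (hqM : q ∣ M) (hq : q ≠ 1)
    {γ : SL(2, ℤ)} (hγ : γ ∈ Gamma1 M) (hc : γ 1 0 ≠ 0) :
    ∃ n : ℤ, γ * T ^ n ∈ gamma1HyperbolicOutside M q := by
  have hqc : (q : ℤ) * γ 1 0 ≠ 0 :=
    mul_ne_zero (by exact_mod_cast ne_zero_of_dvd_ne_zero hM hqM) hc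
  obtain ⟨k, hk⟩ := exists_two_lt_abs_add_mul (γ 0 0 + γ 1 1 + γ 1 0 * (1 - γ 0 1)) hqc
  have ha : (γ 0 0 : ZMod q) = 1 := ((Gamma1_mem _ _).1 (Gamma1_le_Gamma1_of_dvd hqM hγ)).1
  have : Nontrivial (ZMod q) := ZMod.nontrivial_iff.2 hq
  -- the upper-right entry of `γ * T ^ n` is `γ 0 0 * n + γ 0 1 ≡ n + γ 0 1 ≡ 1 (mod q)`
  refine ⟨1 - γ 0 1 + q * k, mul_mem hγ (T_zpow_mem_Gamma1 M _), fun hΓ => ?_, ?_⟩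
  · simpa [coe_T_zpow, Matrix.mul_apply, Fin.sum_univ_two, ha] using (Gamma_mem.1 hΓ).2.1
  · convert hk using 2
    simp only [Fin.isValue, Matrix.SpecialLinearGroup.coe_mul, coe_T_zpow, Matrix.mul_apply,
      Matrix.of_apply, Matrix.cons_val', Matrix.cons_val_zero, Matrix.cons_val_fin_one,
      Fin.sum_univ_two, mul_one, Matrix.cons_val_one, mul_zero, add_zero]
    ring

theorem closure_gamma1HyperbolicOutside (hM : M ≠ 0) (hqM : q ∣ M) (hq : q ≠ 1) :
    Subgroup.closure (gamma1HyperbolicOutside M q) = Gamma1 M := by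
  refine le_antisymm ((Subgroup.closure_le _).2 fun _ h => h.1) fun γ hγ => ?_
  have hT := T_mem_closure_gamma1HyperbolicOutside hM hq
  have of_ne_zero {γ} (hγ : γ ∈ Gamma1 M) (hc : γ 1 0 ≠ 0) :
      γ ∈ Subgroup.closure (gamma1HyperbolicOutside M q) := by
    obtain ⟨n, hn⟩ := exists_mul_T_zpow_mem_gamma1HyperbolicOutside hM hqM hq hγ hc
    simpa using mul_mem (Subgroup.subset_closure hn) (zpow_mem hT (-n))
  by_cases hc : γ 1 0 = 0
  · have hx := T_mul_lowerUnipotent_mem (m := M) (by exact_mod_cast ZMod.natCast_self M)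
      (by omega) hq
    have hd : γ 1 1 ≠ 0 := by
      have := γ.det_coe
      rw [Matrix.det_fin_two, hc] at this
      grind
    have hxc : (γ * (T * lowerUnipotent M)) 1 0 ≠ 0 := by
      simp [Matrix.mul_apply, Fin.sum_univ_two, hc, hd, hM]
    simpa only [mul_inv_cancel_right] using
      mul_mem (of_ne_zero (mul_mem hγ hx.1) hxc) (inv_mem (Subgroup.subset_closure hx))
  · exact of_ne_zero hγ hc

end

/-- Let `N ≥ 1` be an integer and `p` a prime.  The subgroup of `SL₂(ℤ)`
generated by the hyperbolic elements of `Γ₁(Np)` not lying in `Γ(p)`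
(i.e. those `γ = (a b; c d) ∈ Γ₁(Np)` with `γ ∉ Γ(p)` and `|a+d| > 2`)
is all of `Γ₁(Np)`. -/
theorem gamma1_generated_by_hyperbolic (N p : ℕ) (hN : 1 ≤ N) (hp : p.Prime) :
    Subgroup.closure
        {γ : SL(2, ℤ) | γ ∈ Gamma1 (N * p) ∧ γ ∉ Gamma p ∧ 2 < |γ 0 0 + γ 1 1|} =
      Gamma1 (N * p) :=
  closure_gamma1HyperbolicOutside (Nat.mul_ne_zero (by omega) hp.ne_zero) (dvd_mul_left p N)
    hp.ne_one
end
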